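/- arXiv:1908.04028 — 2 statements merged into one kernel-verified Lean document; each statement's English description precedes it below -/
import Mathlib

section
/- Let (X,μ) be a measure space with 0 < μ(X) < ∞, let α ∈ (0,1/2], and let 𝒯 be an α-tree on X. Then for every φ ∈ BMO(𝒯), the function N_𝒯φ belongs to BLO(𝒯) and ‖N_𝒯φ‖_{BLO(𝒯)} ≤ ‖φ‖_{BMO(𝒯)}. The same inequality holds with the operator M_𝒯φ(x) = sup{⟨|φ|⟩_{J,μ} : J ∈ 𝒯, x ∈ J} in place of N_𝒯φ. -/
open MeasureTheory Set Filter Topology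

noncomputable section

/-- The average `⟨f⟩_{J,μ}` of `f` over `J` with respect to `μ`. -/
def avgOn {X : Type*} [MeasurableSpace X] (μ : Measure X) (J : Set X) (f : X → ℝ) : ℝ :=
  ⨍ x in J, f x ∂μ

/-- An `α`-tree on the measure space `(X, μ)`: `gen m` is the `m`-th generation `𝒯_m`,
`children J` is the family `C(J)` of children of `J`. -/
structure AlphaTree {X : Type*} [MeasurableSpace X] (μ : Measure X) (α : ℝ) where
  gen : ℕ → Set (Set X)
  children : Set X → Set (Set X)
  gen_zero : gen 0 = {Set.univ}
  gen_succ : ∀ m, gen (m + 1) = ⋃ J ∈ gen m, children J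
  measurableSet : ∀ m, ∀ J ∈ gen m, MeasurableSet J
  sUnion_children : ∀ m, ∀ J ∈ gen m, ⋃₀ children J = J
  ae_disjoint : ∀ m, ∀ J ∈ gen m,
    (children J).Pairwise fun I I' => μ (I ∩ I') = 0
  measure_child : ∀ m, ∀ J ∈ gen m, ∀ I ∈ children J,
    ENNReal.ofReal α * μ J ≤ μ I
  differentiates : ∀ f : X → ℝ, Integrable f μ →
    ∀ᵐ x ∂μ, ∀ J : ℕ → Set X, (∀ k, J k ∈ gen k ∧ x ∈ J k) →
      Tendsto (fun k => avgOn μ (J k) f) atTop (𝓝 (f x))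

namespace AlphaTree

variable {X : Type*} [MeasurableSpace X] {μ : Measure X} {α : ℝ}

/-- `J ∈ 𝒯`. -/
def Mem (T : AlphaTree μ α) (J : Set X) : Prop := ∃ m, J ∈ T.gen m

/-- The set of quantities `(⟨φ²⟩_J − ⟨φ⟩_J²)^{1/2}`, `J ∈ 𝒯`, whose supremum is
the BMO(𝒯) norm. -/
def bmoSet (T : AlphaTree μ α) (φ : X → ℝ) : Set ℝ :=
  {r | ∃ J, T.Mem J ∧
    r = Real.sqrt (avgOn μ J (fun x => (φ x) ^ 2) - (avgOn μ J φ) ^ 2)}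

/-- Same as `bmoSet`, but over tree elements contained in `K` (i.e. over `𝒯(K)`). -/
def bmoSetOn (T : AlphaTree μ α) (K : Set X) (φ : X → ℝ) : Set ℝ :=
  {r | ∃ J, T.Mem J ∧ J ⊆ K ∧
    r = Real.sqrt (avgOn μ J (fun x => (φ x) ^ 2) - (avgOn μ J φ) ^ 2)}

/-- `‖φ‖_{BMO(𝒯)}`. -/
def bmoNorm (T : AlphaTree μ α) (φ : X → ℝ) : ℝ := sSup (T.bmoSet φ)

/-- `‖φ‖_{BMO(𝒯(K))}`. -/
def bmoNormOn (T : AlphaTree μ α) (K : Set X) (φ : X → ℝ) : ℝ :=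
  sSup (T.bmoSetOn K φ)

/-- `φ ∈ BMO(𝒯)`. -/
def MemBMO (T : AlphaTree μ α) (φ : X → ℝ) : Prop :=
  Integrable φ μ ∧ Integrable (fun x => (φ x) ^ 2) μ ∧ BddAbove (T.bmoSet φ)

/-- `φ|_K ∈ BMO(𝒯(K))`. -/
def MemBMOOn (T : AlphaTree μ α) (K : Set X) (φ : X → ℝ) : Prop :=
  IntegrableOn φ K μ ∧ IntegrableOn (fun x => (φ x) ^ 2) K μ ∧
    BddAbove (T.bmoSetOn K φ)

/-- The set of quantities `⟨φ⟩_J − ess inf_J φ`, `J ∈ 𝒯`, whose supremum is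
the BLO(𝒯) norm. -/
def bloSet (T : AlphaTree μ α) (φ : X → ℝ) : Set ℝ :=
  {r | ∃ J, T.Mem J ∧ r = avgOn μ J φ - essInf φ (μ.restrict J)}

/-- `‖φ‖_{BLO(𝒯)}`. -/
def bloNorm (T : AlphaTree μ α) (φ : X → ℝ) : ℝ := sSup (T.bloSet φ)

/-- `φ ∈ BLO(𝒯)`. -/
def MemBLO (T : AlphaTree μ α) (φ : X → ℝ) : Prop :=
  Integrable φ μ ∧ BddAbove (T.bloSet φ)

/-- The set of averages `⟨φ⟩_{J,μ}` over tree elements `J` containing `x`. -/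
def maxSet (T : AlphaTree μ α) (φ : X → ℝ) (x : X) : Set ℝ :=
  {r | ∃ J, T.Mem J ∧ x ∈ J ∧ r = avgOn μ J φ}

/-- The natural maximal operator `N_𝒯 φ`. -/
def natMax (T : AlphaTree μ α) (φ : X → ℝ) (x : X) : ℝ := sSup (T.maxSet φ x)

/-- The classical maximal operator `M_𝒯 φ`. -/
def clMax (T : AlphaTree μ α) (φ : X → ℝ) (x : X) : ℝ :=
  sSup (T.maxSet (fun y => |φ y|) x)


open scoped ENNReal NNReal

variable {X : Type*} [MeasurableSpace X] {μ : Measure X} {α : ℝ} (T : AlphaTree μ α)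

lemma univ_mem_gen : Set.univ ∈ T.gen 0 := by rw [T.gen_zero]; rfl

lemma mem_univ' : T.Mem Set.univ := ⟨0, T.univ_mem_gen⟩

lemma child_subset {m : ℕ} {J I : Set X} (hJ : J ∈ T.gen m) (hI : I ∈ T.children J) :
    I ⊆ J := by
  rw [← T.sUnion_children m J hJ]
  exact subset_sUnion_of_mem hI

lemma child_mem_gen {m : ℕ} {J I : Set X} (hJ : J ∈ T.gen m) (hI : I ∈ T.children J) :
    I ∈ T.gen (m + 1) := by
  rw [T.gen_succ]
  exact mem_iUnion₂.2 ⟨J, hJ, hI⟩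

lemma parent_exists {m : ℕ} {J : Set X} (hJ : J ∈ T.gen (m + 1)) :
    ∃ P ∈ T.gen m, J ∈ T.children P := by
  rw [T.gen_succ] at hJ
  obtain ⟨P, hP, h⟩ := mem_iUnion₂.1 hJ
  exact ⟨P, hP, h⟩

lemma mem_measurableSet {J : Set X} (hJ : T.Mem J) : MeasurableSet J := by
  obtain ⟨m, hm⟩ := hJ
  exact T.measurableSet m J hm

lemma measure_gen_ge (hα : 0 < α) {m : ℕ} {J : Set X} (hJ : J ∈ T.gen m) :
    ENNReal.ofReal α ^ m * μ Set.univ ≤ μ J := by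
  induction m generalizing J with
  | zero =>
    rw [T.gen_zero] at hJ
    rw [hJ]
    simp
  | succ m ih =>
    obtain ⟨P, hP, hJP⟩ := T.parent_exists hJ
    calc ENNReal.ofReal α ^ (m + 1) * μ Set.univ
        = ENNReal.ofReal α * (ENNReal.ofReal α ^ m * μ Set.univ) := by ring
      _ ≤ ENNReal.ofReal α * μ P := by
          exact mul_le_mul_right (ih hP) _
      _ ≤ μ J := T.measure_child m P hP J hJP

lemma measure_gen_pos (hα : 0 < α) (hμ0 : 0 < μ Set.univ) {m : ℕ} {J : Set X}
    (hJ : J ∈ T.gen m) : 0 < μ J := by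
  refine lt_of_lt_of_le ?_ (T.measure_gen_ge hα hJ)
  have h1 : (0:ℝ≥0∞) < ENNReal.ofReal α := by simpa using hα
  exact ENNReal.mul_pos (pow_ne_zero m h1.ne') hμ0.ne'

lemma measure_mem_pos (hα : 0 < α) (hμ0 : 0 < μ Set.univ) {J : Set X}
    (hJ : T.Mem J) : 0 < μ J := by
  obtain ⟨m, hm⟩ := hJ
  exact T.measure_gen_pos hα hμ0 hm

lemma measure_mem_lt_top (hμfin : μ Set.univ < ⊤) {J : Set X} (hJ : T.Mem J) : μ J < ⊤ :=
  lt_of_le_of_lt (measure_mono (subset_univ J)) hμfin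

lemma gen_pairwise (m : ℕ) : ∀ J ∈ T.gen m, ∀ J' ∈ T.gen m, J ≠ J' → μ (J ∩ J') = 0 := by
  induction m with
  | zero =>
    intro J hJ J' hJ' hne
    rw [T.gen_zero] at hJ hJ'
    exact absurd (hJ.trans hJ'.symm) hne
  | succ m ih =>
    intro J hJ J' hJ' hne
    obtain ⟨P, hP, hJP⟩ := T.parent_exists hJ
    obtain ⟨P', hP', hJP'⟩ := T.parent_exists hJ'
    by_cases hPP : P = P'
    · subst hPP
      exact T.ae_disjoint m P hP hJP hJP' hne
    · have h0 : μ (P ∩ P') = 0 := ih P hP P' hP' hPP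
      have : J ∩ J' ⊆ P ∩ P' :=
        inter_subset_inter (T.child_subset hP hJP) (T.child_subset hP' hJP')
      exact measure_mono_null this h0

lemma ancestor_exists {m k : ℕ} (hk : k ≤ m) {J : Set X} (hJ : J ∈ T.gen m) :
    ∃ A ∈ T.gen k, J ⊆ A := by
  induction m generalizing J with
  | zero =>
    obtain rfl : k = 0 := Nat.le_zero.1 hk
    exact ⟨J, hJ, subset_rfl⟩
  | succ m ih =>
    rcases Nat.lt_or_ge k (m + 1) with h | h
    · obtain ⟨P, hP, hJP⟩ := T.parent_exists hJ
      obtain ⟨A, hA, hPA⟩ := ih (Nat.lt_succ_iff.1 h) hP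
      exact ⟨A, hA, (T.child_subset hP hJP).trans hPA⟩
    · obtain rfl : k = m + 1 := le_antisymm hk h
      exact ⟨J, hJ, subset_rfl⟩

lemma gen_finite (hα : 0 < α) (hμ0 : 0 < μ Set.univ) (hμfin : μ Set.univ < ⊤) (m : ℕ) :
    (T.gen m).Finite := by
  by_contra hinf
  replace hinf : (T.gen m).Infinite := hinf
  set δ : ℝ≥0∞ := ENNReal.ofReal α ^ m * μ Set.univ with hδdef
  have hδ0 : 0 < δ := by
    have h1 : (0:ℝ≥0∞) < ENNReal.ofReal α := by simpa using hα
    exact ENNReal.mul_pos (pow_ne_zero m h1.ne') hμ0.ne'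
  have hδtop : δ ≠ ⊤ := by
    apply ENNReal.mul_ne_top _ hμfin.ne
    exact ENNReal.pow_ne_top ENNReal.ofReal_ne_top
  obtain ⟨n, hn⟩ := ENNReal.exists_nat_gt (show μ Set.univ / δ ≠ ⊤ from
    (ENNReal.div_lt_top hμfin.ne hδ0.ne').ne)
  have hlt : μ Set.univ < n * δ := by
    rwa [ENNReal.div_lt_iff (Or.inl hδ0.ne') (Or.inl hδtop)] at hn
  obtain ⟨t, hts, htfin, htcard⟩ := hinf.exists_subset_ncard_eq n
  have hsum : μ (⋃ J ∈ htfin.toFinset, J) = ∑ J ∈ htfin.toFinset, μ J := by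
    apply measure_biUnion_finset₀
    · intro J hJ J' hJ' hne
      have hJt : J ∈ T.gen m := hts (htfin.mem_toFinset.1 hJ)
      have hJt' : J' ∈ T.gen m := hts (htfin.mem_toFinset.1 hJ')
      exact T.gen_pairwise m J hJt J' hJt' hne
    · intro J hJ
      exact (T.measurableSet m J (hts (htfin.mem_toFinset.1 hJ))).nullMeasurableSet
  have hge : (n : ℝ≥0∞) * δ ≤ ∑ J ∈ htfin.toFinset, μ J := by
    have : ∀ J ∈ htfin.toFinset, δ ≤ μ J := fun J hJ =>
      T.measure_gen_ge hα (hts (htfin.mem_toFinset.1 hJ))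
    calc (n : ℝ≥0∞) * δ = ∑ _J ∈ htfin.toFinset, δ := by
          rw [Finset.sum_const, ← htcard, Set.ncard_eq_toFinset_card t htfin]
          simp [nsmul_eq_mul]
      _ ≤ ∑ J ∈ htfin.toFinset, μ J := Finset.sum_le_sum this
  have hle : μ (⋃ J ∈ htfin.toFinset, J) ≤ μ Set.univ := measure_mono (subset_univ _)
  rw [hsum] at hle
  exact absurd (hge.trans hle) (not_le.2 hlt)

lemma children_finite (hα : 0 < α) (hμ0 : 0 < μ Set.univ) (hμfin : μ Set.univ < ⊤)
    {m : ℕ} {J : Set X} (hJ : J ∈ T.gen m) : (T.children J).Finite := by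
  apply Set.Finite.subset (T.gen_finite hα hμ0 hμfin (m + 1))
  intro I hI
  exact T.child_mem_gen hJ hI

lemma tree_countable (hα : 0 < α) (hμ0 : 0 < μ Set.univ) (hμfin : μ Set.univ < ⊤) :
    {J : Set X | T.Mem J}.Countable := by
  have : {J : Set X | T.Mem J} = ⋃ m, T.gen m := by
    ext J
    simp [Mem]
  rw [this]
  exact Set.countable_iUnion fun m => (T.gen_finite hα hμ0 hμfin m).countable

lemma subset_or_null {k k' : ℕ} (hk : k ≤ k') {I I' : Set X}
    (hI : I ∈ T.gen k) (hI' : I' ∈ T.gen k') : I' ⊆ I ∨ μ (I ∩ I') = 0 := by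
  obtain ⟨A, hA, hI'A⟩ := T.ancestor_exists hk hI'
  by_cases hAI : A = I
  · left; rw [← hAI]; exact hI'A
  · right
    have h0 : μ (I ∩ A) = 0 := T.gen_pairwise k I hI A hA (fun h => hAI h.symm)
    exact measure_mono_null (inter_subset_inter subset_rfl hI'A) h0

lemma mem_trichotomy {I I' : Set X} (hI : T.Mem I) (hI' : T.Mem I') :
    I ⊆ I' ∨ I' ⊆ I ∨ μ (I ∩ I') = 0 := by
  obtain ⟨k, hk⟩ := hI
  obtain ⟨k', hk'⟩ := hI'
  rcases le_total k k' with h | h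
  · rcases T.subset_or_null h hk hk' with h1 | h1
    · exact Or.inr (Or.inl h1)
    · exact Or.inr (Or.inr h1)
  · rcases T.subset_or_null h hk' hk with h1 | h1
    · exact Or.inl h1
    · rw [inter_comm] at h1
      exact Or.inr (Or.inr h1)

end AlphaTree
namespace Stmt0Aux

/-- Bellman function. -/
def g (u w : ℝ) : ℝ := Real.sqrt (max u 0 ^ 2 + w) - u

lemma g_nonneg_arg {u w : ℝ} (hw : 0 ≤ w) : 0 ≤ max u 0 ^ 2 + w := by positivity

lemma le_g {p c w : ℝ} (hw : 0 ≤ w) : max c p - p ≤ g (p - c) w := by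
  unfold g
  rcases le_total c p with h | h
  · rw [max_eq_right h]
    have h2 : max (p - c) 0 = p - c := max_eq_left (by linarith)
    have h1 : Real.sqrt ((p - c) ^ 2) ≤ Real.sqrt (max (p - c) 0 ^ 2 + w) := by
      rw [h2]; exact Real.sqrt_le_sqrt (by linarith)
    rw [Real.sqrt_sq (by linarith)] at h1
    linarith
  · rw [max_eq_left h]
    have h2 : max (p - c) 0 = 0 := max_eq_right (by linarith)
    have h1 : (0:ℝ) ≤ Real.sqrt (max (p - c) 0 ^ 2 + w) := Real.sqrt_nonneg _
    linarith

lemma g_le {u w ε : ℝ} (hu : 0 ≤ u) (hw : 0 ≤ w) (hε : 0 ≤ ε) (hwε : w ≤ ε ^ 2) :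
    g u w ≤ ε := by
  unfold g
  rw [max_eq_left hu]
  have h1 : Real.sqrt (u ^ 2 + w) ≤ Real.sqrt ((u + ε) ^ 2) :=
    Real.sqrt_le_sqrt (by nlinarith)
  rw [Real.sqrt_sq (by linarith)] at h1
  linarith

lemma g_mono_w {u w w' : ℝ} (h : w ≤ w') : g u w ≤ g u w' := by
  unfold g
  have := Real.sqrt_le_sqrt (show max u 0 ^ 2 + w ≤ max u 0 ^ 2 + w' by linarith)
  linarith

lemma max_sub_sq_le {u d : ℝ} : (max (u - d) 0) ^ 2 ≤ (max u 0 - d) ^ 2 := by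
  rcases le_total (u - d) 0 with h | h
  · rw [max_eq_right h]
    simpa using sq_nonneg (max u 0 - d)
  · rw [max_eq_left h]
    have h1 : u ≤ max u 0 := le_max_left _ _
    nlinarith

/-- The main (Bellman) inequality, finite form. -/
lemma main_ineq {ι : Type*} (s : Finset ι) (β d w : ι → ℝ)
    (hβ : ∀ i ∈ s, 0 ≤ β i) (hw : ∀ i ∈ s, 0 ≤ w i)
    (hβ1 : ∑ i ∈ s, β i = 1) (hd0 : ∑ i ∈ s, β i * d i = 0) (u : ℝ) :
    ∑ i ∈ s, β i * g (u - d i) (w i) ≤ g u (∑ i ∈ s, β i * (d i ^ 2 + w i)) := by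
  set A : ι → ℝ := fun i => max (u - d i) 0 ^ 2 + w i with hA
  have hAnn : ∀ i ∈ s, 0 ≤ A i := fun i hi => g_nonneg_arg (hw i hi)
  set F : ι → ℝ := fun i => Real.sqrt (β i) with hF
  set G : ι → ℝ := fun i => Real.sqrt (β i * A i) with hG
  have key : ∑ i ∈ s, β i * Real.sqrt (A i)
      ≤ Real.sqrt (max u 0 ^ 2 + ∑ i ∈ s, β i * (d i ^ 2 + w i)) := by
    have step1 : ∀ i ∈ s, β i * Real.sqrt (A i) = F i * G i := by
      intro i hi
      rw [hF, hG]
      simp only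
      rw [Real.sqrt_mul (hβ i hi), ← mul_assoc, Real.mul_self_sqrt (hβ i hi)]
    rw [Finset.sum_congr rfl step1]
    have cs := Finset.sum_mul_sq_le_sq_mul_sq s F G
    have hF2 : ∑ i ∈ s, F i ^ 2 = 1 := by
      rw [← hβ1]
      exact Finset.sum_congr rfl fun i hi => Real.sq_sqrt (hβ i hi)
    have hG2 : ∑ i ∈ s, G i ^ 2 = ∑ i ∈ s, β i * A i :=
      Finset.sum_congr rfl fun i hi => Real.sq_sqrt (mul_nonneg (hβ i hi) (hAnn i hi))
    rw [hF2, hG2, one_mul] at cs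
    have hnn : 0 ≤ ∑ i ∈ s, F i * G i :=
      Finset.sum_nonneg fun i hi => mul_nonneg (Real.sqrt_nonneg _) (Real.sqrt_nonneg _)
    have h3 : ∑ i ∈ s, F i * G i ≤ Real.sqrt (∑ i ∈ s, β i * A i) := by
      calc ∑ i ∈ s, F i * G i = Real.sqrt ((∑ i ∈ s, F i * G i) ^ 2) :=
            (Real.sqrt_sq hnn).symm
        _ ≤ Real.sqrt (∑ i ∈ s, β i * A i) := Real.sqrt_le_sqrt cs
    refine h3.trans (Real.sqrt_le_sqrt ?_)
    have pt : ∀ i ∈ s, β i * A i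
        ≤ β i * (d i ^ 2 + w i) + max u 0 ^ 2 * β i - 2 * max u 0 * (β i * d i) := by
      intro i hi
      have h1 : (max (u - d i) 0) ^ 2 ≤ (max u 0 - d i) ^ 2 := max_sub_sq_le
      have h2 := hβ i hi
      rw [hA]; simp only
      nlinarith
    calc ∑ i ∈ s, β i * A i
        ≤ ∑ i ∈ s, (β i * (d i ^ 2 + w i) + max u 0 ^ 2 * β i - 2 * max u 0 * (β i * d i)) :=
          Finset.sum_le_sum pt
      _ = max u 0 ^ 2 + ∑ i ∈ s, β i * (d i ^ 2 + w i) := by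
          rw [Finset.sum_sub_distrib, Finset.sum_add_distrib, ← Finset.mul_sum, ← Finset.mul_sum,
            hβ1, hd0]
          ring
  unfold g
  have expand : ∀ i ∈ s, β i * (Real.sqrt (max (u - d i) 0 ^ 2 + w i) - (u - d i))
      = β i * Real.sqrt (A i) - u * β i + β i * d i := by
    intro i hi
    rw [hA]; simp only; ring
  rw [Finset.sum_congr rfl expand, Finset.sum_add_distrib, Finset.sum_sub_distrib,
    ← Finset.mul_sum, hβ1, hd0]
  have := key
  linarith

end Stmt0Aux
namespace Stmt0Aux

open MeasureTheory Set Filter Topology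
open scoped ENNReal NNReal

section Avg

variable {X : Type*} [MeasurableSpace X] {μ : Measure X}

lemma avg_eq (J : Set X) (f : X → ℝ) :
    avgOn μ J f = ((μ J).toReal)⁻¹ * ∫ x in J, f x ∂μ := by
  rw [avgOn, setAverage_eq, smul_eq_mul, measureReal_def]

lemma integral_eq_avg {J : Set X} (h0 : (μ J).toReal ≠ 0) (f : X → ℝ) :
    ∫ x in J, f x ∂μ = (μ J).toReal * avgOn μ J f := by
  rw [avg_eq]
  field_simp

lemma abs_avg_le {J : Set X} {f : X → ℝ} (hf : Integrable f μ)
    (h0 : 0 < (μ J).toReal) :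
    |avgOn μ J f| ≤ ((μ J).toReal)⁻¹ * ∫ x, |f x| ∂μ := by
  rw [avg_eq]
  rw [abs_mul, abs_of_nonneg (by positivity)]
  have h1 : |∫ x in J, f x ∂μ| ≤ ∫ x in J, |f x| ∂μ := by
    simpa using norm_integral_le_integral_norm (μ := μ.restrict J) f
  have h2 : ∫ x in J, |f x| ∂μ ≤ ∫ x, |f x| ∂μ :=
    setIntegral_le_integral hf.abs (Eventually.of_forall fun x => abs_nonneg _)
  have h3 : (0:ℝ) ≤ ((μ J).toReal)⁻¹ := by positivity
  calc ((μ J).toReal)⁻¹ * |∫ x in J, f x ∂μ|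
      ≤ ((μ J).toReal)⁻¹ * ∫ x in J, |f x| ∂μ := by
        exact mul_le_mul_of_nonneg_left h1 h3
    _ ≤ ((μ J).toReal)⁻¹ * ∫ x, |f x| ∂μ := mul_le_mul_of_nonneg_left h2 h3

/-- variance nonnegativity -/
lemma var_nonneg {J : Set X} {f : X → ℝ} (hJm : MeasurableSet J)
    (h0 : 0 < (μ J).toReal)
    (hf1 : Integrable f μ) (hf2 : Integrable (fun x => f x ^ 2) μ) :
    0 ≤ avgOn μ J (fun x => f x ^ 2) - (avgOn μ J f) ^ 2 := by
  set c := avgOn μ J f with hc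
  have hint1 : IntegrableOn f J μ := hf1.integrableOn
  have hint2 : IntegrableOn (fun x => f x ^ 2) J μ := hf2.integrableOn
  have hnn : (0:ℝ) ≤ ∫ x in J, (f x - c) ^ 2 ∂μ :=
    integral_nonneg fun x => sq_nonneg _
  have hexp : ∫ x in J, (f x - c) ^ 2 ∂μ
      = (∫ x in J, f x ^ 2 ∂μ) - 2 * c * (∫ x in J, f x ∂μ) + c ^ 2 * (μ J).toReal := by
    have : ∀ x, (f x - c) ^ 2 = f x ^ 2 - (2 * c) * f x + c ^ 2 := by intro x; ring
    rw [integral_congr_ae (Eventually.of_forall fun x => this x)]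
    rw [integral_add (by exact (hint2.sub (hint1.const_mul _))) (integrableOn_const (C := c ^ 2) (ne_of_lt ?_))]
    · rw [integral_sub hint2 (hint1.const_mul _), integral_const_mul, setIntegral_const,
        smul_eq_mul, measureReal_def]
      ring
    · exact lt_of_le_of_ne (le_top) (by intro h; rw [h] at h0; simp at h0)
  rw [hexp, integral_eq_avg h0.ne' f, integral_eq_avg h0.ne' (fun x => f x ^ 2)] at hnn
  have heq : (μ J).toReal * avgOn μ J (fun x => f x ^ 2) - 2 * c * ((μ J).toReal * c)
      + c ^ 2 * (μ J).toReal = (μ J).toReal * (avgOn μ J (fun x => f x ^ 2) - c ^ 2) := by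
    ring
  rw [heq] at hnn
  exact nonneg_of_mul_nonneg_right hnn h0

end Avg

end Stmt0Aux
namespace AlphaTree

open MeasureTheory Set Filter Topology
open scoped ENNReal NNReal

section Children

variable {X : Type*} [MeasurableSpace X] {μ : Measure X} {α : ℝ}

variable (T : AlphaTree μ α)

lemma childFinset_spec (hα : 0 < α) (hμ0 : 0 < μ Set.univ) (hμfin : μ Set.univ < ⊤)
    {m : ℕ} {J : Set X} (hJ : J ∈ T.gen m) :
    ∀ I ∈ (T.children_finite hα hμ0 hμfin hJ).toFinset, I ∈ T.children J := by
  intro I hI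
  exact (T.children_finite hα hμ0 hμfin hJ).mem_toFinset.1 hI

lemma iUnion_childFinset (hα : 0 < α) (hμ0 : 0 < μ Set.univ) (hμfin : μ Set.univ < ⊤)
    {m : ℕ} {J : Set X} (hJ : J ∈ T.gen m) :
    ⋃ (i : ↥((T.children_finite hα hμ0 hμfin hJ).toFinset)), (i : Set X) = J := by
  ext x
  simp only [Set.mem_iUnion, Subtype.exists, exists_prop, Set.Finite.mem_toFinset]
  conv_rhs => rw [← T.sUnion_children m J hJ]
  exact (Set.mem_sUnion).symm

lemma biUnion_childFinset (hα : 0 < α) (hμ0 : 0 < μ Set.univ) (hμfin : μ Set.univ < ⊤)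
    {m : ℕ} {J : Set X} (hJ : J ∈ T.gen m) :
    ⋃ I ∈ (T.children_finite hα hμ0 hμfin hJ).toFinset, I = J := by
  ext x
  simp only [Set.mem_iUnion, exists_prop, Set.Finite.mem_toFinset]
  conv_rhs => rw [← T.sUnion_children m J hJ]
  exact (Set.mem_sUnion).symm

lemma sum_child_integral (hα : 0 < α) (hμ0 : 0 < μ Set.univ) (hμfin : μ Set.univ < ⊤)
    {m : ℕ} {J : Set X} (hJ : J ∈ T.gen m) (f : X → ℝ) (hf : IntegrableOn f J μ) :
    ∫ x in J, f x ∂μ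
      = ∑ I ∈ (T.children_finite hα hμ0 hμfin hJ).toFinset, ∫ x in I, f x ∂μ := by
  classical
  have hmem : ∀ I ∈ (T.children_finite hα hμ0 hμfin hJ).toFinset, I ∈ T.children J :=
    T.childFinset_spec hα hμ0 hμfin hJ
  have hU := T.iUnion_childFinset hα hμ0 hμfin hJ
  have hm : ∀ i : ↥((T.children_finite hα hμ0 hμfin hJ).toFinset),
      NullMeasurableSet (i : Set X) μ := by
    intro i
    exact (T.measurableSet (m+1) i (T.child_mem_gen hJ (hmem i i.2))).nullMeasurableSet
  have hd : Pairwise (Function.onFun (MeasureTheory.AEDisjoint μ)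
      fun i : ↥((T.children_finite hα hμ0 hμfin hJ).toFinset) => (i : Set X)) := by
    intro i j hij
    have hne : (i : Set X) ≠ (j : Set X) := fun h => hij (Subtype.ext h)
    exact T.ae_disjoint m J hJ (hmem i i.2) (hmem j j.2) hne
  have hfi : IntegrableOn f
      (⋃ (i : ↥((T.children_finite hα hμ0 hμfin hJ).toFinset)), (i : Set X)) μ := by
    rw [hU]; exact hf
  have h := MeasureTheory.integral_iUnion_ae hm hd hfi
  rw [hU] at h
  rw [h, tsum_fintype]
  exact Finset.sum_coe_sort _ fun I => ∫ x in I, f x ∂μ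

lemma sum_child_measure (hα : 0 < α) (hμ0 : 0 < μ Set.univ) (hμfin : μ Set.univ < ⊤)
    {m : ℕ} {J : Set X} (hJ : J ∈ T.gen m) :
    (μ J).toReal
      = ∑ I ∈ (T.children_finite hα hμ0 hμfin hJ).toFinset, (μ I).toReal := by
  classical
  have hmem : ∀ I ∈ (T.children_finite hα hμ0 hμfin hJ).toFinset, I ∈ T.children J :=
    T.childFinset_spec hα hμ0 hμfin hJ
  have h1 : μ J = ∑ I ∈ (T.children_finite hα hμ0 hμfin hJ).toFinset, μ I := by
    conv_lhs => rw [← T.biUnion_childFinset hα hμ0 hμfin hJ]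
    apply measure_biUnion_finset₀
    · intro I hI I' hI' hne
      exact T.ae_disjoint m J hJ (hmem I hI) (hmem I' hI') hne
    · intro I hI
      exact (T.measurableSet (m+1) I (T.child_mem_gen hJ (hmem I hI))).nullMeasurableSet
  rw [h1, ENNReal.toReal_sum]
  intro I hI
  exact (T.measure_mem_lt_top hμfin ⟨m+1, T.child_mem_gen hJ (hmem I hI)⟩).ne

lemma measure_toReal_pos (hα : 0 < α) (hμ0 : 0 < μ Set.univ) (hμfin : μ Set.univ < ⊤)
    {J : Set X} (hJ : T.Mem J) : 0 < (μ J).toReal :=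
  ENNReal.toReal_pos (T.measure_mem_pos hα hμ0 hJ).ne' (T.measure_mem_lt_top hμfin hJ).ne

end Children

end AlphaTree
namespace Stmt0Aux

open MeasureTheory Set Filter Topology
open scoped ENNReal NNReal Classical

section FoldHelpers

lemma fold_max_cases {ι : Type*} (s : Finset ι) (b : ℝ) (f : ι → ℝ) :
    s.fold max b f = b ∨ ∃ i ∈ s, s.fold max b f = f i := by
  classical
  induction s using Finset.induction_on with
  | empty => left; simp
  | insert a s ha ih =>
    rw [Finset.fold_insert ha]
    rcases max_cases (f a) (s.fold max b f) with ⟨h1, _⟩ | ⟨h1, _⟩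
    · right; exact ⟨a, Finset.mem_insert_self a s, h1⟩
    · rcases ih with h | ⟨i, hi, h⟩
      · left; exact h1.trans h
      · right; exact ⟨i, Finset.mem_insert_of_mem hi, h1.trans h⟩

lemma fold_max_measurable {X : Type*} [MeasurableSpace X] {ι : Type*} (s : Finset ι)
    (b : ℝ) (F : ι → X → ℝ) (hF : ∀ i ∈ s, Measurable (F i)) :
    Measurable fun x => s.fold max b (fun i => F i x) := by
  classical
  induction s using Finset.induction_on with
  | empty => simpa using measurable_const
  | insert a s ha ih =>
    simp only [Finset.fold_insert ha]
    exact (hF a (Finset.mem_insert_self a s)).max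
      (ih fun i hi => hF i (Finset.mem_insert_of_mem hi))

end FoldHelpers

section GfDef

variable {X : Type*} [MeasurableSpace X] {μ : Measure X} {α : ℝ}

/-- Truncated localized maximal function along the tree. -/
noncomputable def Gf (T : AlphaTree μ α) (f : X → ℝ) : ℕ → Set X → X → ℝ
  | 0, J, _ => avgOn μ J f
  | (n+1), J, x =>
      if h : (T.children J).Finite then
        h.toFinset.fold max (avgOn μ J f)
          (fun I => if x ∈ I then Gf T f n I x else avgOn μ J f)
      else avgOn μ J f

variable (T : AlphaTree μ α) (f : X → ℝ)

lemma Gf_zero (J : Set X) (x : X) : Gf T f 0 J x = avgOn μ J f := rfl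

lemma Gf_succ (hα : 0 < α) (hμ0 : 0 < μ Set.univ) (hμfin : μ Set.univ < ⊤) {m : ℕ} {J : Set X} (hJ : J ∈ T.gen m) (n : ℕ) (x : X) :
    Gf T f (n+1) J x = (T.children_finite hα hμ0 hμfin hJ).toFinset.fold max (avgOn μ J f)
      (fun I => if x ∈ I then Gf T f n I x else avgOn μ J f) := by
  rw [Gf, dif_pos (T.children_finite hα hμ0 hμfin hJ)]

lemma Gf_base_le (hα : 0 < α) (hμ0 : 0 < μ Set.univ) (hμfin : μ Set.univ < ⊤) {m : ℕ} {J : Set X} (hJ : J ∈ T.gen m) (n : ℕ) (x : X) :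
    avgOn μ J f ≤ Gf T f n J x := by
  cases n with
  | zero => exact le_rfl
  | succ n =>
    rw [Gf_succ T f hα hμ0 hμfin hJ]
    exact (Finset.le_fold_max _).2 (Or.inl le_rfl)

lemma Gf_child_le (hα : 0 < α) (hμ0 : 0 < μ Set.univ) (hμfin : μ Set.univ < ⊤) {m : ℕ} {J I : Set X} (hJ : J ∈ T.gen m) (hI : I ∈ T.children J)
    {x : X} (hx : x ∈ I) (n : ℕ) :
    Gf T f n I x ≤ Gf T f (n+1) J x := by
  rw [Gf_succ T f hα hμ0 hμfin hJ]
  refine (Finset.le_fold_max _).2 (Or.inr ⟨I, (T.children_finite hα hμ0 hμfin hJ).mem_toFinset.2 hI, ?_⟩)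
  rw [if_pos hx]

lemma Gf_mono_succ (hα : 0 < α) (hμ0 : 0 < μ Set.univ) (hμfin : μ Set.univ < ⊤) (n : ℕ) : ∀ {m : ℕ} {J : Set X}, J ∈ T.gen m → ∀ x,
    Gf T f n J x ≤ Gf T f (n+1) J x := by
  induction n with
  | zero => intro m J hJ x; exact Gf_base_le T f hα hμ0 hμfin hJ 1 x
  | succ n ih =>
    intro m J hJ x
    rw [Gf_succ T f hα hμ0 hμfin hJ, Gf_succ T f hα hμ0 hμfin hJ]
    refine (Finset.fold_max_le _).2 ⟨(Finset.le_fold_max _).2 (Or.inl le_rfl), ?_⟩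
    intro I hI
    by_cases hx : x ∈ I
    · rw [if_pos hx]
      refine le_trans (ih (T.child_mem_gen hJ ((T.children_finite hα hμ0 hμfin hJ).mem_toFinset.1 hI)) x) ?_
      refine (Finset.le_fold_max _).2 (Or.inr ⟨I, hI, ?_⟩)
      rw [if_pos hx]
    · rw [if_neg hx]
      exact (Finset.le_fold_max _).2 (Or.inl le_rfl)

lemma Gf_mono (hα : 0 < α) (hμ0 : 0 < μ Set.univ) (hμfin : μ Set.univ < ⊤) {n n' : ℕ} (h : n ≤ n') {m : ℕ} {J : Set X} (hJ : J ∈ T.gen m) (x : X) :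
    Gf T f n J x ≤ Gf T f n' J x := by
  induction n', h using Nat.le_induction with
  | base => exact le_rfl
  | succ n' hn ih => exact ih.trans (Gf_mono_succ T f hα hμ0 hμfin n' hJ x)

lemma Gf_attained (hα : 0 < α) (hμ0 : 0 < μ Set.univ) (hμfin : μ Set.univ < ⊤) (n : ℕ) : ∀ {m : ℕ} {J : Set X}, J ∈ T.gen m → ∀ {x}, x ∈ J →
    ∃ k, k ≤ m + n ∧ ∃ I, I ∈ T.gen k ∧ x ∈ I ∧ Gf T f n J x = avgOn μ I f := by
  induction n with
  | zero => intro m J hJ x hx; exact ⟨m, le_rfl, J, hJ, hx, rfl⟩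
  | succ n ih =>
    intro m J hJ x hx
    rw [Gf_succ T f hα hμ0 hμfin hJ]
    rcases fold_max_cases _ _ _ with h | ⟨I, hI, h⟩
    · exact ⟨m, by omega, J, hJ, hx, h⟩
    · by_cases hx' : x ∈ I
      · rw [if_pos hx'] at h
        obtain ⟨k, hk, I', hI', hx'', h'⟩ := ih
          (T.child_mem_gen hJ ((T.children_finite hα hμ0 hμfin hJ).mem_toFinset.1 hI)) hx'
        exact ⟨k, by omega, I', hI', hx'', by rw [h, h']⟩
      · rw [if_neg hx'] at h
        exact ⟨m, by omega, J, hJ, hx, h⟩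

lemma Gf_measurable (hα : 0 < α) (hμ0 : 0 < μ Set.univ) (hμfin : μ Set.univ < ⊤) (n : ℕ) : ∀ {m : ℕ} {J : Set X}, J ∈ T.gen m →
    Measurable (Gf T f n J) := by
  induction n with
  | zero => intro m J _; exact measurable_const
  | succ n ih =>
    intro m J hJ
    have hfun : Gf T f (n+1) J = fun x =>
        (T.children_finite hα hμ0 hμfin hJ).toFinset.fold max (avgOn μ J f)
          (fun I => (fun y => if y ∈ I then Gf T f n I y else avgOn μ J f) x) :=
      funext fun x => Gf_succ T f hα hμ0 hμfin hJ n x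
    rw [hfun]
    apply fold_max_measurable
    intro I hI
    have hIg := T.child_mem_gen hJ ((T.children_finite hα hμ0 hμfin hJ).mem_toFinset.1 hI)
    exact Measurable.ite (T.measurableSet _ _ hIg) (ih hIg) measurable_const

end GfDef

end Stmt0Aux
namespace Stmt0Aux

open MeasureTheory Set Filter Topology
open scoped ENNReal NNReal Classical

section GfBound

variable {X : Type*} [MeasurableSpace X] {μ : Measure X} {α : ℝ}
variable (T : AlphaTree μ α) (f : X → ℝ)

/-- Uniform bound for `Gf` on generations up to `k`. -/
noncomputable def Cb (f : X → ℝ) (k : ℕ) : ℝ :=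
  ((ENNReal.ofReal α ^ k * μ Set.univ).toReal)⁻¹ * ∫ x, |f x| ∂μ

lemma denom_toReal_pos (hα : 0 < α) (hμ0 : 0 < μ Set.univ) (hμfin : μ Set.univ < ⊤)
    (k : ℕ) : 0 < (ENNReal.ofReal α ^ k * μ Set.univ).toReal := by
  have h1 : (0:ℝ≥0∞) < ENNReal.ofReal α := by simpa using hα
  apply ENNReal.toReal_pos
  · exact (ENNReal.mul_pos (pow_ne_zero k h1.ne') hμ0.ne').ne'
  · exact ENNReal.mul_ne_top (ENNReal.pow_ne_top ENNReal.ofReal_ne_top) hμfin.ne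

lemma Gf_bound (hα : 0 < α) (hα1 : α ≤ 1) (hμ0 : 0 < μ Set.univ) (hμfin : μ Set.univ < ⊤)
    (hf1 : Integrable f μ) (n : ℕ) {m : ℕ} {J : Set X} (hJ : J ∈ T.gen m)
    {x : X} (hx : x ∈ J) :
    |Gf T f n J x| ≤ Cb (μ := μ) (α := α) f (m + n) := by
  obtain ⟨k, hk, I, hI, hxI, heq⟩ := Gf_attained T f hα hμ0 hμfin n hJ hx
  rw [heq]
  have hIm : T.Mem I := ⟨k, hI⟩
  have hle : ENNReal.ofReal α ^ (m + n) * μ Set.univ ≤ μ I := by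
    refine le_trans (mul_le_mul_left ?_ _) (T.measure_gen_ge hα hI)
    exact pow_le_pow_right_of_le_one' (by simpa using hα1) hk
  have hIfin : μ I ≠ ⊤ := (T.measure_mem_lt_top hμfin hIm).ne
  have hler : (ENNReal.ofReal α ^ (m + n) * μ Set.univ).toReal ≤ (μ I).toReal :=
    ENNReal.toReal_mono hIfin hle
  have hpos := denom_toReal_pos (μ := μ) hα hμ0 hμfin (m + n)
  have hIr : 0 < (μ I).toReal := lt_of_lt_of_le hpos hler
  refine le_trans (abs_avg_le hf1 hIr) ?_
  unfold Cb
  have habs : (0:ℝ) ≤ ∫ x, |f x| ∂μ := integral_nonneg fun x => abs_nonneg _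
  have hinv : ((μ I).toReal)⁻¹ ≤ ((ENNReal.ofReal α ^ (m + n) * μ Set.univ).toReal)⁻¹ :=
    inv_anti₀ hpos hler
  exact mul_le_mul_of_nonneg_right hinv habs

lemma Phi_integrableOn (hα : 0 < α) (hα1 : α ≤ 1) (hμ0 : 0 < μ Set.univ)
    (hμfin : μ Set.univ < ⊤) (hf1 : Integrable f μ) (n : ℕ) {m : ℕ} {J : Set X}
    (hJ : J ∈ T.gen m) (p : ℝ) :
    IntegrableOn (fun x => max (Gf T f n J x) p - p) J μ := by
  have hmeas : Measurable fun x => max (Gf T f n J x) p - p :=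
    ((Gf_measurable T f hα hμ0 hμfin n hJ).max measurable_const).sub measurable_const
  refine Integrable.mono' (g := fun _ => Cb (μ := μ) (α := α) f (m + n) + 2 * |p|)
    (integrableOn_const (T.measure_mem_lt_top hμfin ⟨m, hJ⟩).ne) hmeas.aestronglyMeasurable ?_
  rw [ae_restrict_iff' (T.measurableSet m J hJ)]
  refine Eventually.of_forall fun x hx => ?_
  have hb := Gf_bound T f hα hα1 hμ0 hμfin hf1 n hJ hx
  rw [Real.norm_eq_abs]
  have h1 : max (Gf T f n J x) p - p ≤ |Gf T f n J x| + 2 * |p| := by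
    rcases max_cases (Gf T f n J x) p with ⟨h, _⟩ | ⟨h, _⟩ <;> rw [h] <;>
      cases abs_cases (Gf T f n J x) <;> cases abs_cases p <;> linarith
  have h2 : -(Cb (μ := μ) (α := α) f (m + n) + 2 * |p|) ≤ max (Gf T f n J x) p - p := by
    have h3 : (0:ℝ) ≤ max (Gf T f n J x) p - p := by
      have := le_max_right (Gf T f n J x) p; linarith
    have h4 : (0:ℝ) ≤ Cb (μ := μ) (α := α) f (m + n) := le_trans (abs_nonneg _) hb
    have h5 : (0:ℝ) ≤ 2 * |p| := by positivity
    linarith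
  rw [abs_le]
  refine ⟨h2, ?_⟩
  show max (Gf T f n J x) p - p ≤ Cb (μ := μ) (α := α) f (m + n) + 2 * |p|
  linarith

end GfBound

end Stmt0Aux
namespace Stmt0Aux

open MeasureTheory Set Filter Topology
open scoped ENNReal NNReal Classical

section MainLemma

variable {X : Type*} [MeasurableSpace X] {μ : Measure X} {α : ℝ}
variable (T : AlphaTree μ α) (f : X → ℝ)

lemma g_nonneg {u w : ℝ} (hw : 0 ≤ w) : 0 ≤ g u w := by
  unfold g
  have h1 : Real.sqrt (max u 0 ^ 2) ≤ Real.sqrt (max u 0 ^ 2 + w) :=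
    Real.sqrt_le_sqrt (by linarith)
  rw [Real.sqrt_sq (le_max_right _ _)] at h1
  have h2 : u ≤ max u 0 := le_max_left _ _
  linarith

lemma g_shift {p c w : ℝ} : g (max p c - c) w + (max p c - p) = g (p - c) w := by
  rcases le_total c p with h | h
  · rw [max_eq_left h]; ring
  · rw [max_eq_right h]
    unfold g
    have e1 : c - c = 0 := sub_self c
    have h2 : max (p - c) 0 = 0 := max_eq_right (by linarith)
    have h3 : max (c - c) 0 = 0 := by rw [e1, max_self]
    rw [h2, h3]
    ring

lemma main_lemma (hα : 0 < α) (hα1 : α ≤ 1) (hμ0 : 0 < μ Set.univ)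
    (hμfin : μ Set.univ < ⊤) (hf1 : Integrable f μ)
    (hf2 : Integrable (fun x => f x ^ 2) μ) :
    ∀ n : ℕ, ∀ {m : ℕ} {J : Set X}, J ∈ T.gen m → ∀ p : ℝ,
    ∫ x in J, (max (Gf T f n J x) p - p) ∂μ
      ≤ (μ J).toReal
        * g (p - avgOn μ J f) (avgOn μ J (fun y => f y ^ 2) - (avgOn μ J f) ^ 2) := by
  intro n
  induction n with
  | zero =>
    intro m J hJ p
    have hJr : 0 < (μ J).toReal := T.measure_toReal_pos hα hμ0 hμfin ⟨m, hJ⟩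
    have hVJ : 0 ≤ avgOn μ J (fun y => f y ^ 2) - (avgOn μ J f) ^ 2 :=
      var_nonneg (T.mem_measurableSet ⟨m, hJ⟩) hJr hf1 hf2
    have h0 : ∫ x in J, (max (Gf T f 0 J x) p - p) ∂μ
        = (μ J).toReal * (max (avgOn μ J f) p - p) := by
      simp only [Gf_zero]
      rw [setIntegral_const, smul_eq_mul, measureReal_def]
    rw [h0]
    exact mul_le_mul_of_nonneg_left (le_g hVJ) hJr.le
  | succ n ih =>
    intro m J hJ p
    have hJmem : T.Mem J := ⟨m, hJ⟩
    have hJmeas := T.mem_measurableSet hJmem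
    have hJr : 0 < (μ J).toReal := T.measure_toReal_pos hα hμ0 hμfin hJmem
    set 𝒞 := (T.children_finite hα hμ0 hμfin hJ).toFinset with h𝒞
    have hmem : ∀ I ∈ 𝒞, I ∈ T.children J := T.childFinset_spec hα hμ0 hμfin hJ
    have hgen : ∀ I ∈ 𝒞, I ∈ T.gen (m+1) := fun I hI => T.child_mem_gen hJ (hmem I hI)
    have hImem : ∀ I ∈ 𝒞, T.Mem I := fun I hI => ⟨m+1, hgen I hI⟩
    have hImeas : ∀ I ∈ 𝒞, MeasurableSet I := fun I hI => T.mem_measurableSet (hImem I hI)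
    have hIr : ∀ I ∈ 𝒞, 0 < (μ I).toReal :=
      fun I hI => T.measure_toReal_pos hα hμ0 hμfin (hImem I hI)
    set c := avgOn μ J f with hc
    set q := avgOn μ J (fun y => f y ^ 2) with hq
    set p' := max p c with hp'
    set cI : Set X → ℝ := fun I => avgOn μ I f with hcI
    set qI : Set X → ℝ := fun I => avgOn μ I (fun y => f y ^ 2) with hqI
    set VI : Set X → ℝ := fun I => qI I - (cI I) ^ 2 with hVI
    set β : Set X → ℝ := fun I => (μ I).toReal / (μ J).toReal with hβ
    -- Step A: decompose the integral over children
    have hPhiJ : IntegrableOn (fun x => max (Gf T f (n+1) J x) p - p) J μ :=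
      Phi_integrableOn T f hα hα1 hμ0 hμfin hf1 (n+1) hJ p
    have stepA : ∫ x in J, (max (Gf T f (n+1) J x) p - p) ∂μ
        = ∑ I ∈ 𝒞, ∫ x in I, (max (Gf T f (n+1) J x) p - p) ∂μ :=
      T.sum_child_integral hα hμ0 hμfin hJ _ hPhiJ
    -- Step B: per-child estimate
    have stepB : ∀ I ∈ 𝒞, ∫ x in I, (max (Gf T f (n+1) J x) p - p) ∂μ
        ≤ (μ I).toReal * g (p' - cI I) (VI I) + (p' - p) * (μ I).toReal := by
      intro I hI
      have hnull : μ (⋃ I' ∈ (↑(𝒞.erase I) : Set (Set X)), (I ∩ I')) = 0 := by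
        rw [measure_biUnion_null_iff (𝒞.erase I).countable_toSet]
        intro I' hI'
        have h1 := Finset.mem_erase.1 (Finset.mem_coe.1 hI')
        exact T.ae_disjoint m J hJ (hmem I hI) (hmem I' h1.2) (Ne.symm h1.1)
      have hae : (fun x => max (Gf T f (n+1) J x) p - p)
          =ᵐ[μ.restrict I] fun x => (max (Gf T f n I x) p' - p') + (p' - p) := by
        have hcompl : ∀ᵐ x ∂μ, x ∉ ⋃ I' ∈ (↑(𝒞.erase I) : Set (Set X)), (I ∩ I') :=
          (measure_eq_zero_iff_ae_notMem).1 hnull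
        have : ∀ᵐ x ∂μ, x ∈ I → (max (Gf T f (n+1) J x) p - p
            = (max (Gf T f n I x) p' - p') + (p' - p)) := by
          filter_upwards [hcompl] with x hxbad hxI
          have hG : Gf T f (n+1) J x = max (Gf T f n I x) c := by
            rw [Gf_succ T f hα hμ0 hμfin hJ]
            apply le_antisymm
            · refine (Finset.fold_max_le _).2 ⟨le_max_right _ _, ?_⟩
              intro I' hI'𝒞
              by_cases hxI' : x ∈ I'
              · have heqI : I' = I := by
                  by_contra hne
                  exact hxbad (Set.mem_biUnion
                    (Finset.mem_coe.2 (Finset.mem_erase.2 ⟨hne, hI'𝒞⟩)) ⟨hxI, hxI'⟩)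
                rw [if_pos hxI', heqI]
                exact le_max_left _ _
              · rw [if_neg hxI']
                exact le_max_right _ _
            · refine max_le ?_ ((Finset.le_fold_max _).2 (Or.inl le_rfl))
              refine (Finset.le_fold_max _).2 (Or.inr ⟨I, hI, ?_⟩)
              rw [if_pos hxI]
          rw [hG, max_assoc, max_comm c p, ← hp']
          ring
        exact (ae_restrict_iff' (hImeas I hI)).2 this
      rw [integral_congr_ae hae]
      have hPhiI : IntegrableOn (fun x => max (Gf T f n I x) p' - p') I μ :=
        Phi_integrableOn T f hα hα1 hμ0 hμfin hf1 n (hgen I hI) p'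
      rw [integral_add hPhiI
        (integrableOn_const (T.measure_mem_lt_top hμfin (hImem I hI)).ne)]
      rw [setIntegral_const, smul_eq_mul, measureReal_def]
      have hihI := ih (hgen I hI) p'
      have : (μ I).toReal * (p' - p) = (p' - p) * (μ I).toReal := by ring
      rw [this]
      exact add_le_add_left hihI _
    have stepC : ∫ x in J, (max (Gf T f (n+1) J x) p - p) ∂μ
        ≤ ∑ I ∈ 𝒞, ((μ I).toReal * g (p' - cI I) (VI I) + (p' - p) * (μ I).toReal) := by
      rw [stepA]; exact Finset.sum_le_sum stepB
    -- key sums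
    have hkey1 : ∑ I ∈ 𝒞, (μ I).toReal = (μ J).toReal :=
      (T.sum_child_measure hα hμ0 hμfin hJ).symm
    have hkey2 : ∑ I ∈ 𝒞, (μ I).toReal * cI I = (μ J).toReal * c := by
      calc ∑ I ∈ 𝒞, (μ I).toReal * cI I = ∑ I ∈ 𝒞, ∫ x in I, f x ∂μ :=
            Finset.sum_congr rfl fun I hI => (integral_eq_avg (hIr I hI).ne' f).symm
        _ = ∫ x in J, f x ∂μ :=
            (T.sum_child_integral hα hμ0 hμfin hJ f hf1.integrableOn).symm
        _ = (μ J).toReal * c := integral_eq_avg hJr.ne' f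
    have hkey3 : ∑ I ∈ 𝒞, (μ I).toReal * qI I = (μ J).toReal * q := by
      calc ∑ I ∈ 𝒞, (μ I).toReal * qI I = ∑ I ∈ 𝒞, ∫ x in I, f x ^ 2 ∂μ :=
            Finset.sum_congr rfl fun I hI =>
              (integral_eq_avg (hIr I hI).ne' (fun y => f y ^ 2)).symm
        _ = ∫ x in J, f x ^ 2 ∂μ :=
            (T.sum_child_integral hα hμ0 hμfin hJ _ hf2.integrableOn).symm
        _ = (μ J).toReal * q := integral_eq_avg hJr.ne' (fun y => f y ^ 2)
    have hβ1 : ∑ I ∈ 𝒞, β I = 1 := by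
      rw [hβ]
      simp only
      rw [← Finset.sum_div, hkey1, div_self hJr.ne']
    have hβnn : ∀ I ∈ 𝒞, 0 ≤ β I := fun I hI =>
      div_nonneg ENNReal.toReal_nonneg ENNReal.toReal_nonneg
    have hw : ∀ I ∈ 𝒞, 0 ≤ VI I := fun I hI =>
      var_nonneg (hImeas I hI) (hIr I hI) hf1 hf2
    have hd0 : ∑ I ∈ 𝒞, β I * (cI I - c) = 0 := by
      have hterm : ∀ I ∈ 𝒞, β I * (cI I - c)
          = ((μ I).toReal * cI I) / (μ J).toReal - ((μ I).toReal * c) / (μ J).toReal := by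
        intro I hI
        rw [hβ]
        ring
      rw [Finset.sum_congr rfl hterm, Finset.sum_sub_distrib, ← Finset.sum_div, ← Finset.sum_div,
        hkey2, ← Finset.sum_mul, hkey1]
      ring
    have hMI := main_ineq 𝒞 β (fun I => cI I - c) VI hβnn hw hβ1 hd0 (p' - c)
    have harg : ∑ I ∈ 𝒞, β I * g (p' - c - (cI I - c)) (VI I)
        = ∑ I ∈ 𝒞, β I * g (p' - cI I) (VI I) :=
      Finset.sum_congr rfl fun I hI => by
        rw [show p' - c - (cI I - c) = p' - cI I from by ring]
    rw [harg] at hMI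
    have hkey4 : ∑ I ∈ 𝒞, β I * ((cI I - c) ^ 2 + VI I) = q - c ^ 2 := by
      have hterm : ∀ I ∈ 𝒞, β I * ((cI I - c) ^ 2 + VI I)
          = ((μ I).toReal * qI I) / (μ J).toReal
            - (2 * c) * (((μ I).toReal * cI I) / (μ J).toReal)
            + (c ^ 2) * ((μ I).toReal / (μ J).toReal) := by
        intro I hI
        rw [hβ, hVI]
        simp only
        ring
      rw [Finset.sum_congr rfl hterm, Finset.sum_add_distrib, Finset.sum_sub_distrib,
        ← Finset.sum_div, ← Finset.mul_sum, ← Finset.mul_sum, ← Finset.sum_div, ← Finset.sum_div,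
        hkey2, hkey3, hkey1]
      field_simp
      ring
    rw [hkey4] at hMI
    -- assemble
    have hsum_eq : ∑ I ∈ 𝒞, ((μ I).toReal * g (p' - cI I) (VI I) + (p' - p) * (μ I).toReal)
        = (μ J).toReal * (∑ I ∈ 𝒞, β I * g (p' - cI I) (VI I)) + (p' - p) * (μ J).toReal := by
      rw [Finset.sum_add_distrib]
      congr 1
      · rw [Finset.mul_sum]
        apply Finset.sum_congr rfl
        intro I hI
        rw [hβ]
        field_simp
      · rw [← Finset.mul_sum, hkey1]
    have h2 : (μ J).toReal * (∑ I ∈ 𝒞, β I * g (p' - cI I) (VI I))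
        ≤ (μ J).toReal * g (p' - c) (q - c ^ 2) := mul_le_mul_of_nonneg_left hMI hJr.le
    have h3 : g (p' - c) (q - c ^ 2) + (p' - p) = g (p - c) (q - c ^ 2) := by
      rw [hp']
      exact g_shift
    have h4 : (μ J).toReal * g (p' - c) (q - c ^ 2) + (p' - p) * (μ J).toReal
        = (μ J).toReal * g (p - c) (q - c ^ 2) := by
      rw [← h3]; ring
    calc ∫ x in J, (max (Gf T f (n+1) J x) p - p) ∂μ
        ≤ ∑ I ∈ 𝒞, ((μ I).toReal * g (p' - cI I) (VI I) + (p' - p) * (μ I).toReal) := stepC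
      _ = (μ J).toReal * (∑ I ∈ 𝒞, β I * g (p' - cI I) (VI I)) + (p' - p) * (μ J).toReal :=
          hsum_eq
      _ ≤ (μ J).toReal * g (p' - c) (q - c ^ 2) + (p' - p) * (μ J).toReal := by linarith
      _ = (μ J).toReal * g (p - c) (q - c ^ 2) := h4

end MainLemma

end Stmt0Aux
namespace Stmt0Aux

open MeasureTheory Set Filter Topology
open scoped ENNReal NNReal Classical

section Lifts

variable {X : Type*} [MeasurableSpace X] {μ : Measure X} {α : ℝ}
variable (T : AlphaTree μ α) (f : X → ℝ)

lemma Gf_lift (hα : 0 < α) (hμ0 : 0 < μ Set.univ) (hμfin : μ Set.univ < ⊤) :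
    ∀ (k : ℕ) {I : Set X}, I ∈ T.gen k → ∀ {x : X}, x ∈ I → ∀ n : ℕ,
      Gf T f n I x ≤ Gf T f (n + k) Set.univ x := by
  intro k
  induction k with
  | zero =>
    intro I hI x hx n
    rw [T.gen_zero] at hI
    rw [hI, Nat.add_zero]
  | succ k ih =>
    intro I hI x hx n
    obtain ⟨P, hP, hIP⟩ := T.parent_exists hI
    have h1 : Gf T f n I x ≤ Gf T f (n+1) P x := Gf_child_le T f hα hμ0 hμfin hP hIP hx n
    have h2 := ih hP (T.child_subset hP hIP hx) (n+1)
    rw [show n + 1 + k = n + (k + 1) from by omega] at h2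
    exact h1.trans h2

lemma Gf_liftJ (hα : 0 < α) (hμ0 : 0 < μ Set.univ) (hμfin : μ Set.univ < ⊤)
    {m : ℕ} {J : Set X} (hJ : J ∈ T.gen m) :
    ∀ (j : ℕ) {I : Set X}, I ∈ T.gen (m + j) → I ⊆ J → ∀ {x : X}, x ∈ I → ∀ n : ℕ,
      Gf T f n I x ≤ Gf T f (n + j) J x := by
  intro j
  induction j with
  | zero =>
    intro I hI hIJ x hx n
    have hIJ' : I = J := by
      by_contra hne
      have h0 : μ (I ∩ J) = 0 := T.gen_pairwise m I hI J hJ hne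
      rw [inter_eq_left.2 hIJ] at h0
      exact absurd h0 (T.measure_mem_pos hα hμ0 ⟨m, hI⟩).ne'
    rw [hIJ', Nat.add_zero]
  | succ j ih =>
    intro I hI hIJ x hx n
    obtain ⟨P, hP, hIP⟩ := T.parent_exists hI
    have hPJ : P ⊆ J := by
      obtain ⟨A, hA, hPA⟩ := T.ancestor_exists (Nat.le_add_right m j) hP
      have hAJ : A = J := by
        by_contra hne
        have h0 : μ (A ∩ J) = 0 := T.gen_pairwise m A hA J hJ hne
        have hsub : I ⊆ A ∩ J := subset_inter ((T.child_subset hP hIP).trans hPA) hIJ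
        exact absurd (measure_mono_null hsub h0)
          (T.measure_mem_pos hα hμ0 ⟨m + j + 1, hI⟩).ne'
      exact hAJ ▸ hPA
    have h1 : Gf T f n I x ≤ Gf T f (n+1) P x := Gf_child_le T f hα hμ0 hμfin hP hIP hx n
    have h2 := ih hP hPJ (T.child_subset hP hIP hx) (n+1)
    rw [show n + 1 + j = n + (j + 1) from by omega] at h2
    exact h1.trans h2

lemma maxSet_ub_iff (hα : 0 < α) (hμ0 : 0 < μ Set.univ) (hμfin : μ Set.univ < ⊤)
    (x : X) (r : ℝ) :
    (∀ s ∈ T.maxSet f x, s ≤ r) ↔ (∀ n, Gf T f n Set.univ x ≤ r) := by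
  constructor
  · intro h n
    obtain ⟨k, _, I, hI, hxI, heq⟩ :=
      Gf_attained T f hα hμ0 hμfin n T.univ_mem_gen (mem_univ x)
    rw [heq]
    exact h _ ⟨I, ⟨k, hI⟩, hxI, rfl⟩
  · rintro h s ⟨I, ⟨k, hI⟩, hxI, rfl⟩
    have h1 : Gf T f 0 I x ≤ Gf T f (0 + k) Set.univ x :=
      Gf_lift T f hα hμ0 hμfin k hI hxI 0
    rw [Gf_zero] at h1
    exact h1.trans (h (0 + k))

end Lifts

end Stmt0Aux
namespace Stmt0Aux

open MeasureTheory Set Filter Topology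
open scoped ENNReal NNReal Classical

section Assembly

variable {X : Type*} [MeasurableSpace X] {μ : Measure X} {α : ℝ}
variable (T : AlphaTree μ α) (f : X → ℝ)

lemma W_measurable_n (hα : 0 < α) (hμ0 : 0 < μ Set.univ) (hμfin : μ Set.univ < ⊤)
    {m : ℕ} {J : Set X} (hJ : J ∈ T.gen m) (p : ℝ) (n : ℕ) :
    Measurable fun x => ENNReal.ofReal (max (Gf T f n J x) p - p) :=
  ENNReal.measurable_ofReal.comp
    (((Gf_measurable T f hα hμ0 hμfin n hJ).max measurable_const).sub measurable_const)

lemma W_measurable (hα : 0 < α) (hμ0 : 0 < μ Set.univ) (hμfin : μ Set.univ < ⊤)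
    {m : ℕ} {J : Set X} (hJ : J ∈ T.gen m) (p : ℝ) :
    Measurable fun x => ⨆ n, ENNReal.ofReal (max (Gf T f n J x) p - p) :=
  Measurable.iSup fun n => W_measurable_n T f hα hμ0 hμfin hJ p n

lemma W_lintegral_le (hα : 0 < α) (hα1 : α ≤ 1) (hμ0 : 0 < μ Set.univ)
    (hμfin : μ Set.univ < ⊤) (hf1 : Integrable f μ) (hf2 : Integrable (fun x => f x ^ 2) μ)
    {m : ℕ} {J : Set X} (hJ : J ∈ T.gen m) (p : ℝ) :
    ∫⁻ x in J, (⨆ n, ENNReal.ofReal (max (Gf T f n J x) p - p)) ∂μ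
      ≤ ENNReal.ofReal ((μ J).toReal
          * g (p - avgOn μ J f) (avgOn μ J (fun y => f y ^ 2) - (avgOn μ J f) ^ 2)) := by
  have hmono : Monotone fun n => fun x => ENNReal.ofReal (max (Gf T f n J x) p - p) := by
    intro a b hab
    intro x
    apply ENNReal.ofReal_le_ofReal
    have := Gf_mono T f hα hμ0 hμfin hab hJ x
    have h2 : max (Gf T f a J x) p ≤ max (Gf T f b J x) p := max_le_max this le_rfl
    linarith
  rw [lintegral_iSup (fun n => W_measurable_n T f hα hμ0 hμfin hJ p n) hmono]
  apply iSup_le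
  intro n
  rw [← ofReal_integral_eq_lintegral_ofReal
    (Phi_integrableOn T f hα hα1 hμ0 hμfin hf1 n hJ p)
    (Eventually.of_forall fun x => sub_nonneg.2 (le_max_right _ _))]
  exact ENNReal.ofReal_le_ofReal (main_lemma T f hα hα1 hμ0 hμfin hf1 hf2 n hJ p)

lemma natMax_props (hα : 0 < α) (hα1 : α ≤ 1) (hμ0 : 0 < μ Set.univ)
    (hμfin : μ Set.univ < ⊤)
    (hf1 : Integrable f μ) (hf2 : Integrable (fun x => f x ^ 2) μ)
    (ε : ℝ) (hε0 : 0 ≤ ε)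
    (hV : ∀ J, T.Mem J → avgOn μ J (fun x => f x ^ 2) - (avgOn μ J f) ^ 2 ≤ ε ^ 2) :
    Integrable (T.natMax f) μ ∧
      ∀ J, T.Mem J → avgOn μ J (T.natMax f) - essInf (T.natMax f) (μ.restrict J) ≤ ε := by
  haveI : IsFiniteMeasure μ := ⟨hμfin⟩
  have huniv : Set.univ ∈ T.gen 0 := T.univ_mem_gen
  set c0 := avgOn μ Set.univ f with hc0
  set W0 : X → ℝ≥0∞ := fun x => ⨆ n, ENNReal.ofReal (max (Gf T f n Set.univ x) c0 - c0)
    with hW0def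
  have hW0meas : Measurable W0 := W_measurable T f hα hμ0 hμfin huniv c0
  have hW0le : ∫⁻ x, W0 x ∂μ ≤ ENNReal.ofReal ((μ Set.univ).toReal
      * g (c0 - c0) (avgOn μ Set.univ (fun y => f y ^ 2) - c0 ^ 2)) := by
    rw [← setLIntegral_univ]
    exact W_lintegral_le T f hα hα1 hμ0 hμfin hf1 hf2 huniv c0
  have hW0top : ∫⁻ x, W0 x ∂μ ≠ ⊤ := (lt_of_le_of_lt hW0le ENNReal.ofReal_lt_top).ne
  have hW0fin : ∀ᵐ x ∂μ, W0 x < ⊤ := ae_lt_top hW0meas hW0top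
  -- pointwise identification of natMax
  have hlub : ∀ x : X, W0 x ≠ ⊤ → IsLUB (T.maxSet f x) (c0 + (W0 x).toReal) := by
    intro x hx
    have hubGf : ∀ n, Gf T f n Set.univ x ≤ c0 + (W0 x).toReal := by
      intro n
      have h1 : ENNReal.ofReal (max (Gf T f n Set.univ x) c0 - c0) ≤ W0 x :=
        le_iSup (fun n => ENNReal.ofReal (max (Gf T f n Set.univ x) c0 - c0)) n
      have h2 : max (Gf T f n Set.univ x) c0 - c0 ≤ (W0 x).toReal :=
        (ENNReal.ofReal_le_iff_le_toReal hx).1 h1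
      have h3 := le_max_left (Gf T f n Set.univ x) c0
      linarith
    constructor
    · intro s hs
      exact (maxSet_ub_iff T f hα hμ0 hμfin x (c0 + (W0 x).toReal)).2 hubGf s hs
    · intro r hr
      have hGf : ∀ n, Gf T f n Set.univ x ≤ r :=
        (maxSet_ub_iff T f hα hμ0 hμfin x r).1 (fun s hs => hr hs)
      have hc0r : c0 ≤ r := by
        have := hGf 0
        rwa [Gf_zero] at this
      have hW0le' : W0 x ≤ ENNReal.ofReal (r - c0) := by
        apply iSup_le
        intro n
        apply ENNReal.ofReal_le_ofReal
        have h2 : max (Gf T f n Set.univ x) c0 ≤ r := max_le (hGf n) hc0r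
        linarith
      have h3 : (W0 x).toReal ≤ r - c0 := by
        have h4 := ENNReal.toReal_mono ENNReal.ofReal_ne_top hW0le'
        rwa [ENNReal.toReal_ofReal (by linarith)] at h4
      linarith
  have hmaxne : ∀ x : X, (T.maxSet f x).Nonempty :=
    fun x => ⟨c0, Set.univ, T.mem_univ', mem_univ x, rfl⟩
  have hNat_eq : T.natMax f =ᵐ[μ] fun x => c0 + (W0 x).toReal := by
    filter_upwards [hW0fin] with x hx
    exact (hlub x hx.ne).csSup_eq (hmaxne x)
  have hNR_int : Integrable (fun x => c0 + (W0 x).toReal) μ :=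
    (integrable_const c0).add
      (integrable_toReal_of_lintegral_ne_top hW0meas.aemeasurable hW0top)
  have hNint : Integrable (T.natMax f) μ := hNR_int.congr hNat_eq.symm
  refine ⟨hNint, ?_⟩
  -- per tree element estimate
  rintro J ⟨m, hJ⟩
  have hJmem : T.Mem J := ⟨m, hJ⟩
  have hJmeas := T.mem_measurableSet hJmem
  have hJr : 0 < (μ J).toReal := T.measure_toReal_pos hα hμ0 hμfin hJmem
  set cJ := avgOn μ J f with hcJ
  set aset : Set ℝ := {r | ∃ I, T.Mem I ∧ J ⊆ I ∧ r = avgOn μ I f} with haset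
  set aJ := sSup aset with haJ
  have hane : aset.Nonempty := ⟨cJ, J, hJmem, subset_rfl, rfl⟩
  have habdd : BddAbove aset := by
    refine ⟨((μ J).toReal)⁻¹ * ∫ x, |f x| ∂μ, ?_⟩
    rintro r ⟨I, hImem', hJI, rfl⟩
    have hIr : 0 < (μ I).toReal := T.measure_toReal_pos hα hμ0 hμfin hImem'
    have h1 := abs_avg_le (μ := μ) (J := I) hf1 hIr
    have h2 : (μ J).toReal ≤ (μ I).toReal :=
      ENNReal.toReal_mono (T.measure_mem_lt_top hμfin hImem').ne (measure_mono hJI)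
    have h3 : ((μ I).toReal)⁻¹ ≤ ((μ J).toReal)⁻¹ := by
      apply inv_anti₀ hJr h2
    have habs : (0:ℝ) ≤ ∫ x, |f x| ∂μ := integral_nonneg fun x => abs_nonneg _
    calc avgOn μ I f ≤ |avgOn μ I f| := le_abs_self _
      _ ≤ ((μ I).toReal)⁻¹ * ∫ x, |f x| ∂μ := h1
      _ ≤ ((μ J).toReal)⁻¹ * ∫ x, |f x| ∂μ := mul_le_mul_of_nonneg_right h3 habs
  have haJc : cJ ≤ aJ := le_csSup habdd ⟨J, hJmem, subset_rfl, rfl⟩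
  -- local excess function
  set WJ : X → ℝ≥0∞ := fun x => ⨆ n, ENNReal.ofReal (max (Gf T f n J x) aJ - aJ) with hWJdef
  have hWJmeas : Measurable WJ := W_measurable T f hα hμ0 hμfin hJ aJ
  have hVJ0 : 0 ≤ avgOn μ J (fun y => f y ^ 2) - cJ ^ 2 := var_nonneg hJmeas hJr hf1 hf2
  have hgle : g (aJ - cJ) (avgOn μ J (fun y => f y ^ 2) - cJ ^ 2) ≤ ε :=
    g_le (by linarith) hVJ0 hε0 (hV J hJmem)
  have hWJle : ∫⁻ x in J, WJ x ∂μ ≤ ENNReal.ofReal ((μ J).toReal * ε) := by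
    refine le_trans (W_lintegral_le T f hα hα1 hμ0 hμfin hf1 hf2 hJ aJ) ?_
    exact ENNReal.ofReal_le_ofReal (mul_le_mul_of_nonneg_left hgle hJr.le)
  have hWJtop : ∫⁻ x in J, WJ x ∂μ ≠ ⊤ := (lt_of_le_of_lt hWJle ENNReal.ofReal_lt_top).ne
  have hWJfin : ∀ᵐ x ∂μ.restrict J, WJ x < ⊤ := ae_lt_top hWJmeas hWJtop
  have hψint : Integrable (fun x => (WJ x).toReal) (μ.restrict J) :=
    integrable_toReal_of_lintegral_ne_top hWJmeas.aemeasurable hWJtop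
  -- the bad null set
  set BAD : Set X := ⋃ I ∈ {I : Set X | T.Mem I ∧ μ (I ∩ J) = 0}, (I ∩ J) with hBADdef
  have hBADnull : μ BAD = 0 := by
    rw [hBADdef, measure_biUnion_null_iff
      ((T.tree_countable hα hμ0 hμfin).mono (fun I hI => hI.1))]
    exact fun I hI => hI.2
  -- a.e. upper bound on J
  have hup : ∀ᵐ x ∂μ.restrict J, T.natMax f x ≤ aJ + (WJ x).toReal := by
    have h1 : ∀ᵐ x ∂μ.restrict J, x ∉ BAD :=
      ae_restrict_of_ae ((measure_eq_zero_iff_ae_notMem).1 hBADnull)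
    filter_upwards [h1, hWJfin, ae_restrict_mem hJmeas] with x hxbad hxfin hxJ
    refine csSup_le (hmaxne x) ?_
    rintro r ⟨I, hImem', hxI, rfl⟩
    have hψnn : (0:ℝ) ≤ (WJ x).toReal := ENNReal.toReal_nonneg
    have hsup_le : ∀ j : ℕ, Gf T f j J x ≤ aJ + (WJ x).toReal := by
      intro j
      have hle1 : ENNReal.ofReal (max (Gf T f j J x) aJ - aJ) ≤ WJ x :=
        le_iSup (fun n => ENNReal.ofReal (max (Gf T f n J x) aJ - aJ)) j
      have hle2 : max (Gf T f j J x) aJ - aJ ≤ (WJ x).toReal :=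
        (ENNReal.ofReal_le_iff_le_toReal hxfin.ne).1 hle1
      have := le_max_left (Gf T f j J x) aJ
      linarith
    rcases T.mem_trichotomy hImem' hJmem with hIJ | hJI | hnullI
    · obtain ⟨k, hIk⟩ := hImem'
      rcases le_or_gt m k with hmk | hkm
      · obtain ⟨j, rfl⟩ : ∃ j, k = m + j := ⟨k - m, by omega⟩
        have hGle := Gf_liftJ T f hα hμ0 hμfin hJ j hIk hIJ hxI 0
        rw [Gf_zero, Nat.zero_add] at hGle
        exact hGle.trans (hsup_le j)
      · have hJI : J ⊆ I := by
          obtain ⟨A, hA, hJA⟩ := T.ancestor_exists (le_of_lt hkm) hJ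
          have hIA : I = A := by
            by_contra hne
            have h0 : μ (I ∩ A) = 0 := T.gen_pairwise k I hIk A hA hne
            rw [inter_eq_left.2 (hIJ.trans hJA)] at h0
            exact absurd h0 (T.measure_mem_pos hα hμ0 ⟨k, hIk⟩).ne'
          rw [hIA]
          exact hJA
        have : avgOn μ I f ≤ aJ := le_csSup habdd ⟨I, ⟨k, hIk⟩, hJI, rfl⟩
        linarith
    · have : avgOn μ I f ≤ aJ := le_csSup habdd ⟨I, hImem', hJI, rfl⟩
      linarith
    · have hIBAD : T.Mem I ∧ μ (I ∩ J) = 0 := ⟨hImem', hnullI⟩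
      exact absurd (Set.mem_biUnion
        (show I ∈ {I : Set X | T.Mem I ∧ μ (I ∩ J) = 0} from hIBAD)
        (show x ∈ I ∩ J from ⟨hxI, hxJ⟩)) hxbad
  -- average bound
  have havg : avgOn μ J (T.natMax f) ≤ aJ + ε := by
    have hint : IntegrableOn (T.natMax f) J μ := hNint.integrableOn
    have h2 : ∫ x in J, T.natMax f x ∂μ ≤ ∫ x in J, (aJ + (WJ x).toReal) ∂μ := by
      apply integral_mono_ae hint _ hup
      exact (integrableOn_const (T.measure_mem_lt_top hμfin hJmem).ne).add hψint
    have h3 : ∫ x in J, (aJ + (WJ x).toReal) ∂μ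
        = aJ * (μ J).toReal + ∫ x in J, (WJ x).toReal ∂μ := by
      rw [integral_add (integrableOn_const (C := aJ) (T.measure_mem_lt_top hμfin hJmem).ne) hψint,
        setIntegral_const, smul_eq_mul, measureReal_def]
      ring
    have h4 : ∫ x in J, (WJ x).toReal ∂μ = (∫⁻ x in J, WJ x ∂μ).toReal :=
      integral_toReal hWJmeas.aemeasurable hWJfin
    have h5 : (∫⁻ x in J, WJ x ∂μ).toReal ≤ (μ J).toReal * ε := by
      have h6 := ENNReal.toReal_mono ENNReal.ofReal_ne_top hWJle
      rwa [ENNReal.toReal_ofReal (by positivity)] at h6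
    rw [avg_eq]
    have h7 : ∫ x in J, T.natMax f x ∂μ ≤ aJ * (μ J).toReal + (μ J).toReal * ε := by
      rw [h3, h4] at h2
      linarith
    calc ((μ J).toReal)⁻¹ * ∫ x in J, T.natMax f x ∂μ
        ≤ ((μ J).toReal)⁻¹ * (aJ * (μ J).toReal + (μ J).toReal * ε) :=
          mul_le_mul_of_nonneg_left h7 (by positivity)
      _ = aJ + ε := by
          field_simp
  -- essential infimum bound
  have hlow : ∀ᵐ x ∂μ.restrict J, aJ ≤ T.natMax f x := by
    filter_upwards [ae_restrict_of_ae hW0fin, ae_restrict_mem hJmeas] with x hxfin hxJ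
    refine csSup_le hane ?_
    rintro r ⟨I, hImem', hJI, rfl⟩
    have hmem' : avgOn μ I f ∈ T.maxSet f x := ⟨I, hImem', hJI hxJ, rfl⟩
    exact le_csSup ⟨c0 + (W0 x).toReal, fun s hs => (hlub x hxfin.ne).1 hs⟩ hmem'
  have hcb : IsCoboundedUnder (· ≥ ·) (ae (μ.restrict J)) (T.natMax f) := by
    refine ⟨avgOn μ J (T.natMax f), fun a ha => ?_⟩
    rw [Filter.eventually_map] at ha
    have h1 : ∫ x in J, a ∂μ ≤ ∫ x in J, T.natMax f x ∂μ :=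
      integral_mono_ae (integrableOn_const (T.measure_mem_lt_top hμfin hJmem).ne)
        hNint.integrableOn ha
    rw [setIntegral_const, smul_eq_mul, measureReal_def] at h1
    rw [avg_eq]
    calc a = ((μ J).toReal)⁻¹ * ((μ J).toReal * a) := by field_simp
      _ ≤ ((μ J).toReal)⁻¹ * ∫ x in J, T.natMax f x ∂μ :=
          mul_le_mul_of_nonneg_left h1 (by positivity)
  have hess : aJ ≤ essInf (T.natMax f) (μ.restrict J) := by
    have heq : essInf (T.natMax f) (μ.restrict J)
        = Filter.liminf (T.natMax f) (ae (μ.restrict J)) := rfl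
    rw [heq]
    exact Filter.le_liminf_of_le hcb hlow
  linarith

end Assembly

end Stmt0Aux
open Stmt0Aux in
/-- For an `α`-tree `𝒯` on a measure space `(X,μ)` with
`0 < μ(X) < ∞` and `α ∈ (0,1/2]`, both the natural maximal operator `N_𝒯` and the
classical maximal operator `M_𝒯` map `BMO(𝒯)` into `BLO(𝒯)` with norm at most `1`. -/
theorem statement0 {X : Type*} [MeasurableSpace X] (μ : Measure X)
    (hμ0 : 0 < μ Set.univ) (hμfin : μ Set.univ < ⊤)
    (α : ℝ) (hα : α ∈ Set.Ioc (0 : ℝ) (1 / 2))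
    (T : AlphaTree μ α) (φ : X → ℝ) (hφ : T.MemBMO φ) :
    (T.MemBLO (T.natMax φ) ∧ T.bloNorm (T.natMax φ) ≤ T.bmoNorm φ) ∧
    (T.MemBLO (T.clMax φ) ∧ T.bloNorm (T.clMax φ) ≤ T.bmoNorm φ) := by
  obtain ⟨hαpos, hα12⟩ := hα
  obtain ⟨hφ1, hφ2, hφbdd⟩ := hφ
  have hαle1 : α ≤ 1 := le_trans hα12 (by norm_num)
  set ε := T.bmoNorm φ with hεdef
  have hεmem : Real.sqrt (avgOn μ Set.univ (fun x => (φ x) ^ 2)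
      - (avgOn μ Set.univ φ) ^ 2) ∈ T.bmoSet φ := ⟨Set.univ, T.mem_univ', rfl⟩
  have hε0 : 0 ≤ ε := le_trans (Real.sqrt_nonneg _) (le_csSup hφbdd hεmem)
  have hVφ : ∀ J, T.Mem J → avgOn μ J (fun x => φ x ^ 2) - (avgOn μ J φ) ^ 2 ≤ ε ^ 2 := by
    intro J hJ
    have hmem : Real.sqrt (avgOn μ J (fun x => (φ x) ^ 2) - (avgOn μ J φ) ^ 2)
        ∈ T.bmoSet φ := ⟨J, hJ, rfl⟩
    have h1 : Real.sqrt (avgOn μ J (fun x => φ x ^ 2) - (avgOn μ J φ) ^ 2) ≤ ε :=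
      le_csSup hφbdd hmem
    have h2 : 0 ≤ avgOn μ J (fun x => φ x ^ 2) - (avgOn μ J φ) ^ 2 :=
      var_nonneg (T.mem_measurableSet hJ) (T.measure_toReal_pos hαpos hμ0 hμfin hJ) hφ1 hφ2
    calc avgOn μ J (fun x => φ x ^ 2) - (avgOn μ J φ) ^ 2
        = Real.sqrt (avgOn μ J (fun x => φ x ^ 2) - (avgOn μ J φ) ^ 2) ^ 2 :=
          (Real.sq_sqrt h2).symm
      _ ≤ ε ^ 2 := pow_le_pow_left₀ (Real.sqrt_nonneg _) h1 2
  have hN := natMax_props T φ hαpos hαle1 hμ0 hμfin hφ1 hφ2 ε hε0 hVφ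
  -- the absolute-value function
  have hsq_eq : (fun x => |φ x| ^ 2) = fun x => φ x ^ 2 := funext fun x => sq_abs (φ x)
  have habs2 : Integrable (fun x => |φ x| ^ 2) μ := by rw [hsq_eq]; exact hφ2
  have hVabs : ∀ J, T.Mem J →
      avgOn μ J (fun x => |φ x| ^ 2) - (avgOn μ J fun y => |φ y|) ^ 2 ≤ ε ^ 2 := by
    intro J hJ
    have h1 : avgOn μ J (fun x => |φ x| ^ 2) = avgOn μ J (fun x => φ x ^ 2) := by
      rw [hsq_eq]
    have h3 : |avgOn μ J φ| ≤ avgOn μ J fun y => |φ y| := by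
      rw [avg_eq, avg_eq, abs_mul, abs_of_nonneg (show (0:ℝ) ≤ ((μ J).toReal)⁻¹ by positivity)]
      refine mul_le_mul_of_nonneg_left ?_ (by positivity)
      simpa using norm_integral_le_integral_norm (μ := μ.restrict J) φ
    have h2 : (avgOn μ J φ) ^ 2 ≤ (avgOn μ J fun y => |φ y|) ^ 2 := by
      have h4 : |avgOn μ J φ| ^ 2 ≤ (avgOn μ J fun y => |φ y|) ^ 2 :=
        pow_le_pow_left₀ (abs_nonneg _) h3 2
      rwa [sq_abs] at h4
    have h5 := hVφ J hJ
    rw [h1]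
    linarith
  have hM := natMax_props T (fun y => |φ y|) hαpos hαle1 hμ0 hμfin hφ1.abs habs2 ε hε0 hVabs
  -- common BLO constructor
  have mkBLO : ∀ u : X → ℝ, Integrable u μ →
      (∀ J, T.Mem J → avgOn μ J u - essInf u (μ.restrict J) ≤ ε) →
      T.MemBLO u ∧ T.bloNorm u ≤ ε := by
    intro u hint hub
    have hbdd : BddAbove (T.bloSet u) := by
      refine ⟨ε, ?_⟩
      rintro r ⟨J, hJ, rfl⟩
      exact hub J hJ
    have hne : (T.bloSet u).Nonempty :=
      ⟨avgOn μ Set.univ u - essInf u (μ.restrict Set.univ), Set.univ, T.mem_univ', rfl⟩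
    refine ⟨⟨hint, hbdd⟩, ?_⟩
    apply csSup_le hne
    rintro r ⟨J, hJ, rfl⟩
    exact hub J hJ
  have hclN : T.clMax φ = T.natMax (fun y => |φ y|) := rfl
  refine ⟨mkBLO (T.natMax φ) hN.1 hN.2, ?_⟩
  rw [hclN]
  exact mkBLO (T.natMax (fun y => |φ y|)) hM.1 hM.2
end
end

section
/- Let α ∈ (0,1/2], let 𝒯 be an α-tree on a measure space (X,μ) with 0 < μ(X) < ∞, and let φ ∈ BMO(𝒯) with ‖φ‖_{BMO(𝒯)} ≤ 1. If F is an α-concave function on Ω, then for any I ∈ 𝒯, F(⟨φ⟩_{I,μ}, ⟨φ²⟩_{I,μ}) ≥ (1/μ(I)) Σ_{J ∈ 𝒯₁(I)} μ(J)·F(⟨φ⟩_{J,μ}, ⟨φ²⟩_{J,μ}), where 𝒯₁(I) = C(I) is the set of children of I. -/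
open MeasureTheory Set Filter Topology

noncomputable section

/-- The parabolic strip `Ω = {x : x₁² ≤ x₂ ≤ x₁² + 1}`. -/
def Omega : Set (ℝ × ℝ) := {x | x.1 ^ 2 ≤ x.2 ∧ x.2 ≤ x.1 ^ 2 + 1}

/-- `F` is `α`-concave on `Ω`. -/
def AlphaConcaveOn (α : ℝ) (F : ℝ × ℝ → ℝ) : Prop :=
  ∀ β ∈ Set.Icc α (1 / 2 : ℝ), ∀ xm ∈ Omega, ∀ xp ∈ Omega,
    (1 - β) • xm + β • xp ∈ Omega →
    (1 - β) * F xm + β * F xp ≤ F ((1 - β) • xm + β • xp)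


section Statement10Aux

open Finset in
/-- Splitting off a pair: among points of `Omega` with barycenter in `Omega`,
there exist two indices whose weighted merge stays in `Omega`. -/
lemma exists_good_pair {ι : Type*} [DecidableEq ι] (s : Finset ι) (hcard : 2 ≤ s.card)
    (w : ι → ℝ) (x : ι → ℝ × ℝ)
    (hw : ∀ i ∈ s, 0 < w i) (hsum : ∑ i ∈ s, w i = 1)
    (hx : ∀ i ∈ s, x i ∈ Omega)
    (hbar : (∑ i ∈ s, w i • x i) ∈ Omega) :
    ∃ j ∈ s, ∃ l ∈ s, j ≠ l ∧
      ((w j / (w j + w l)) • x j + (w l / (w j + w l)) • x l) ∈ Omega := by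
  classical
  set u : ι → ℝ := fun i => (x i).1 with hu
  set v : ι → ℝ := fun i => (x i).2 - (x i).1 ^ 2 with hv
  have hv0 : ∀ i ∈ s, 0 ≤ v i := fun i hi => sub_nonneg.2 (hx i hi).1
  have hv1 : ∀ i ∈ s, v i ≤ 1 := by
    intro i hi
    have h2 := (hx i hi).2
    simp only [hv]
    linarith
  have hbar1 : (∑ i ∈ s, w i • x i).1 = ∑ i ∈ s, w i * u i := by
    rw [Prod.fst_sum]; rfl
  have hbar2 : (∑ i ∈ s, w i • x i).2 = ∑ i ∈ s, (w i * v i + w i * u i ^ 2) := by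
    rw [Prod.snd_sum]
    refine Finset.sum_congr rfl fun i _ => ?_
    simp only [Prod.smul_snd, smul_eq_mul, hv, hu]
    ring
  -- the quantity `S + (U - M^2) ≤ 1`
  have hG : (∑ i ∈ s, w i * v i) + ((∑ i ∈ s, w i * u i ^ 2) - (∑ i ∈ s, w i * u i) ^ 2) ≤ 1 := by
    have h2 := hbar.2
    rw [hbar2, hbar1, Finset.sum_add_distrib] at h2
    linarith
  -- reduce to an inequality about weights
  suffices hpair : ∃ j ∈ s, ∃ l ∈ s, j ≠ l ∧
      (w j + w l) * (w j * v j + w l * v l) + w j * w l * (u j - u l) ^ 2 ≤ (w j + w l) ^ 2 by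
    obtain ⟨j, hj, l, hl, hjl, hle⟩ := hpair
    refine ⟨j, hj, l, hl, hjl, ?_⟩
    have hW : (0 : ℝ) < w j + w l := add_pos (hw j hj) (hw l hl)
    set W := w j + w l with hWdef
    set y := (w j / W) • x j + (w l / W) • x l with hy
    have hy1 : y.1 = (w j * u j + w l * u l) / W := by
      simp only [hy, Prod.fst_add, Prod.smul_fst, smul_eq_mul, hu]
      field_simp
    have hy2 : y.2 = (w j * (x j).2 + w l * (x l).2) / W := by
      simp only [hy, Prod.snd_add, Prod.smul_snd, smul_eq_mul]
      field_simp
    have hx2j : (x j).2 = v j + u j ^ 2 := by simp only [hv, hu]; ring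
    have hx2l : (x l).2 = v l + u l ^ 2 := by simp only [hv, hu]; ring
    have key : y.2 - y.1 ^ 2
        = (W * (w j * v j + w l * v l) + w j * w l * (u j - u l) ^ 2) / W ^ 2 := by
      rw [hy1, hy2, hx2j, hx2l]
      field_simp
      ring
    have hnum0 : 0 ≤ W * (w j * v j + w l * v l) + w j * w l * (u j - u l) ^ 2 := by
      have := hv0 j hj; have := hv0 l hl
      have := (hw j hj).le; have := (hw l hl).le
      positivity
    constructor
    · have : 0 ≤ y.2 - y.1 ^ 2 := by
        rw [key]; positivity
      linarith
    · have h1 : y.2 - y.1 ^ 2 ≤ 1 := by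
        rw [key, div_le_one (by positivity)]
        exact hle
      linarith
  -- pigeonhole argument
  by_contra hcon
  push_neg at hcon
  set g : ι → ι → ℝ := fun j l =>
    (w j + w l) ^ 2 - (w j + w l) * (w j * v j + w l * v l) - w j * w l * (u j - u l) ^ 2
    with hg
  have hneg : ∑ j ∈ s, ∑ l ∈ s.erase j, g j l < 0 := by
    have h1 : ∀ j ∈ s, ∑ l ∈ s.erase j, g j l < 0 := by
      intro j hj
      have hne : (s.erase j).Nonempty := by
        rw [← Finset.card_pos, Finset.card_erase_of_mem hj]
        omega
      calc ∑ l ∈ s.erase j, g j l < ∑ l ∈ s.erase j, (0 : ℝ) := by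
            refine Finset.sum_lt_sum_of_nonempty hne fun l hl => ?_
            have hls := Finset.mem_of_mem_erase hl
            have hlj : j ≠ l := (Finset.ne_of_mem_erase hl).symm
            have := hcon j hj l hls hlj
            simp only [hg]
            linarith
        _ = 0 := Finset.sum_const_zero
    calc ∑ j ∈ s, ∑ l ∈ s.erase j, g j l < ∑ j ∈ s, (0 : ℝ) := by
          refine Finset.sum_lt_sum_of_nonempty ?_ h1
          rw [← Finset.card_pos]; omega
      _ = 0 := Finset.sum_const_zero
  -- compute the total sum in closed form
  have hinner : ∀ j ∈ s, ∑ l ∈ s.erase j, g j l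
      = (w j ^ 2 - w j ^ 2 * v j) * (s.card : ℝ)
        + (2 * w j - w j * v j - w j * u j ^ 2) * 1
        + 1 * (∑ i ∈ s, w i ^ 2)
        + (-(w j)) * (∑ i ∈ s, w i * v i)
        + (-1) * (∑ i ∈ s, w i ^ 2 * v i)
        + (2 * (w j * u j)) * (∑ i ∈ s, w i * u i)
        + (-(w j)) * (∑ i ∈ s, w i * u i ^ 2)
        - (4 * w j ^ 2 - 4 * w j ^ 2 * v j) := by
    intro j hj
    have hsplit : ∑ l ∈ s.erase j, g j l = (∑ l ∈ s, g j l) - g j j := by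
      rw [← Finset.add_sum_erase s (g j) hj]; ring
    have hexp : ∀ l ∈ s, g j l
        = (w j ^ 2 - w j ^ 2 * v j) * 1
          + (2 * w j - w j * v j - w j * u j ^ 2) * w l
          + 1 * (w l ^ 2)
          + (-(w j)) * (w l * v l)
          + (-1) * (w l ^ 2 * v l)
          + (2 * (w j * u j)) * (w l * u l)
          + (-(w j)) * (w l * u l ^ 2) := fun l _ => by simp only [hg]; ring
    rw [hsplit, Finset.sum_congr rfl hexp]
    simp only [Finset.sum_add_distrib, ← Finset.mul_sum, Finset.sum_const, nsmul_eq_mul,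
      mul_one, hsum, hg]
    ring
  have htotal : ∑ j ∈ s, ∑ l ∈ s.erase j, g j l
      = 2 * ((s.card : ℝ) - 2) * ((∑ i ∈ s, w i ^ 2) - (∑ i ∈ s, w i ^ 2 * v i))
        + 2 - 2 * (∑ i ∈ s, w i * v i)
        - 2 * ((∑ i ∈ s, w i * u i ^ 2) - (∑ i ∈ s, w i * u i) ^ 2) := by
    rw [Finset.sum_congr rfl hinner]
    have hexp2 : ∀ j ∈ s,
        (w j ^ 2 - w j ^ 2 * v j) * (s.card : ℝ)
          + (2 * w j - w j * v j - w j * u j ^ 2) * 1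
          + 1 * (∑ i ∈ s, w i ^ 2)
          + (-(w j)) * (∑ i ∈ s, w i * v i)
          + (-1) * (∑ i ∈ s, w i ^ 2 * v i)
          + (2 * (w j * u j)) * (∑ i ∈ s, w i * u i)
          + (-(w j)) * (∑ i ∈ s, w i * u i ^ 2)
          - (4 * w j ^ 2 - 4 * w j ^ 2 * v j)
        = (((s.card : ℝ) - 4) * (w j ^ 2)
            + (4 - (s.card : ℝ)) * (w j ^ 2 * v j)
            + (2 - (∑ i ∈ s, w i * v i) - (∑ i ∈ s, w i * u i ^ 2)) * (w j)
            + (-1) * (w j * v j)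
            + (-1) * (w j * u j ^ 2)
            + ((∑ i ∈ s, w i ^ 2) - (∑ i ∈ s, w i ^ 2 * v i)) * 1
            + (2 * (∑ i ∈ s, w i * u i)) * (w j * u j)) := fun j _ => by ring
    rw [Finset.sum_congr rfl hexp2]
    simp only [Finset.sum_add_distrib, ← Finset.mul_sum, Finset.sum_const, nsmul_eq_mul,
      mul_one, hsum]
    ring
  have hQR : (∑ i ∈ s, w i ^ 2 * v i) ≤ ∑ i ∈ s, w i ^ 2 :=
    Finset.sum_le_sum fun i hi => by nlinarith [hv1 i hi, sq_nonneg (w i)]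
  have hn : (2 : ℝ) ≤ (s.card : ℝ) := by exact_mod_cast hcard
  rw [htotal] at hneg
  nlinarith [mul_nonneg (by linarith : (0:ℝ) ≤ (s.card : ℝ) - 2)
    (by linarith : (0:ℝ) ≤ (∑ i ∈ s, w i ^ 2) - (∑ i ∈ s, w i ^ 2 * v i))]

open Finset in
lemma sum_pair_split {M : Type*} [AddCommMonoid M] {ι : Type*} [DecidableEq ι]
    (s : Finset ι) {j l : ι} (hj : j ∈ s) (hl : l ∈ s) (hjl : j ≠ l) (f : ι → M) :
    ∑ i ∈ s, f i = f j + (f l + ∑ i ∈ (s.erase j).erase l, f i) := by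
  rw [← Finset.add_sum_erase s f hj,
    ← Finset.add_sum_erase (s.erase j) f (Finset.mem_erase.2 ⟨hjl.symm, hl⟩)]

open Finset in
/-- The key finite-dimensional inequality: an `α`-concave function dominates
convex combinations with weights `≥ α` of points of `Omega` whose barycenter is in `Omega`. -/
lemma concave_sum {α : ℝ} (hα : α ∈ Set.Ioc (0 : ℝ) (1 / 2))
    {F : ℝ × ℝ → ℝ} (hF : AlphaConcaveOn α F) {ι : Type*} [DecidableEq ι] :
    ∀ (n : ℕ) (s : Finset ι) (w : ι → ℝ) (x : ι → ℝ × ℝ), s.card = n →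
      (∀ i ∈ s, α ≤ w i) → ∑ i ∈ s, w i = 1 → (∀ i ∈ s, x i ∈ Omega) →
      (∑ i ∈ s, w i • x i) ∈ Omega →
      ∑ i ∈ s, w i * F (x i) ≤ F (∑ i ∈ s, w i • x i) := by
  intro n
  induction n using Nat.strong_induction_on with
  | _ n IH =>
  intro s w x hcard hw hsum hx hbar
  have hwpos : ∀ i ∈ s, 0 < w i := fun i hi => lt_of_lt_of_le hα.1 (hw i hi)
  rcases Nat.lt_or_ge n 2 with hn2 | hn2
  · -- n = 0 or 1
    interval_cases n
    · exfalso
      rw [Finset.card_eq_zero] at hcard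
      rw [hcard] at hsum
      simpa using hsum
    · rw [Finset.card_eq_one] at hcard
      obtain ⟨a, rfl⟩ := hcard
      simp only [Finset.sum_singleton] at hsum ⊢
      rw [hsum, one_mul, one_smul]
  · -- n ≥ 2 : find a good pair and merge it
    obtain ⟨j, hj, l, hl, hjl, hyΩ⟩ :
        ∃ j ∈ s, ∃ l ∈ s, j ≠ l ∧ w l ≤ w j ∧
          ((w j / (w j + w l)) • x j + (w l / (w j + w l)) • x l) ∈ Omega := by
      obtain ⟨j, hj, l, hl, hjl, hy⟩ :=
        exists_good_pair s (hcard ▸ hn2) w x hwpos hsum hx hbar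
      rcases le_total (w l) (w j) with hle | hle
      · exact ⟨j, hj, l, hl, hjl, hle, hy⟩
      · refine ⟨l, hl, j, hj, hjl.symm, hle, ?_⟩
        rw [add_comm (w l) (w j), add_comm ((w l / (w j + w l)) • x l)]
        exact hy
    obtain ⟨hlj, hyΩ⟩ := hyΩ
    have hWpos : (0 : ℝ) < w j + w l := add_pos (hwpos j hj) (hwpos l hl)
    set W := w j + w l with hWdef
    set y := (w j / W) • x j + (w l / W) • x l with hydef
    -- W ≤ 1
    have hW1 : W ≤ 1 := by
      have hsplit := sum_pair_split s hj hl hjl w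
      have hrest : 0 ≤ ∑ i ∈ (s.erase j).erase l, w i :=
        Finset.sum_nonneg fun i hi =>
          (hwpos i (Finset.mem_of_mem_erase (Finset.mem_of_mem_erase hi))).le
      rw [hsplit] at hsum
      simp only [hWdef]
      linarith
    set β := w l / W with hβdef
    have hβ : β ∈ Set.Icc α (1 / 2 : ℝ) := by
      constructor
      · rw [hβdef, le_div_iff₀ hWpos]
        calc α * W ≤ α * 1 := by
              have := hα.1
              nlinarith
          _ = α := mul_one α
          _ ≤ w l := hw l hl
      · rw [hβdef, div_le_iff₀ hWpos]
        simp only [hWdef]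
        linarith
    have h1β : 1 - β = w j / W := by
      rw [hβdef]
      field_simp
      simp [hWdef]
    have hyeq : (1 - β) • x j + β • x l = y := by rw [h1β, hβdef, hydef]
    have hFy : (1 - β) * F (x j) + β * F (x l) ≤ F y := by
      rw [← hyeq] at hyΩ ⊢
      exact hF β hβ (x j) (hx j hj) (x l) (hx l hl) hyΩ
    have hmul : w j * F (x j) + w l * F (x l) ≤ W * F y := by
      have h := mul_le_mul_of_nonneg_left hFy hWpos.le
      have e : W * ((1 - β) * F (x j) + β * F (x l)) = w j * F (x j) + w l * F (x l) := by
        rw [h1β, hβdef]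
        field_simp
      rw [e] at h
      exact h
    -- merged configuration
    set s' := s.erase l with hs'
    set w' := Function.update w j W with hw'
    set x' := Function.update x j y with hx'
    have hjs' : j ∈ s' := Finset.mem_erase.2 ⟨hjl, hj⟩
    have hcard' : s'.card = n - 1 := by
      rw [hs', Finset.card_erase_of_mem hl, hcard]
    have htsub : ∀ i ∈ (s'.erase j), i ≠ j ∧ i ≠ l ∧ i ∈ s := by
      intro i hi
      have h1 := Finset.mem_erase.1 hi
      have h2 := Finset.mem_erase.1 h1.2
      exact ⟨h1.1, h2.1, h2.2⟩
    have herase_comm : s'.erase j = (s.erase j).erase l := by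
      rw [hs', Finset.erase_right_comm]
    -- sums over the merged configuration
    have hsum_split : ∀ (f f' : ι → ℝ × ℝ) (g g' : ι → ℝ),
        True := fun _ _ _ _ => trivial
    have hWy : W • y = w j • x j + w l • x l := by
      rw [hydef, smul_add, smul_smul, smul_smul]
      rw [mul_div_cancel₀ _ hWpos.ne', mul_div_cancel₀ _ hWpos.ne']
    have hsum'w : ∑ i ∈ s', w' i = 1 := by
      rw [← Finset.add_sum_erase s' w' hjs']
      have : ∑ i ∈ s'.erase j, w' i = ∑ i ∈ s'.erase j, w i := by
        refine Finset.sum_congr rfl fun i hi => ?_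
        rw [hw', Function.update_of_ne (htsub i hi).1]
      rw [this, herase_comm]
      have hWj : w' j = W := by rw [hw', Function.update_self]
      rw [hWj]
      have := sum_pair_split s hj hl hjl w
      rw [this] at hsum
      simp only [hWdef]
      linarith
    have hsum'x : ∑ i ∈ s', w' i • x' i = ∑ i ∈ s, w i • x i := by
      rw [← Finset.add_sum_erase s' (fun i => w' i • x' i) hjs']
      have h1 : ∑ i ∈ s'.erase j, w' i • x' i = ∑ i ∈ s'.erase j, w i • x i := by
        refine Finset.sum_congr rfl fun i hi => ?_
        rw [hw', hx', Function.update_of_ne (htsub i hi).1, Function.update_of_ne (htsub i hi).1]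
      rw [h1, herase_comm]
      have h2 : w' j • x' j = W • y := by
        rw [hw', hx', Function.update_self, Function.update_self]
      rw [h2, hWy, sum_pair_split s hj hl hjl (fun i => w i • x i)]
      abel
    have hsum'F : ∑ i ∈ s, w i * F (x i) ≤ ∑ i ∈ s', w' i * F (x' i) := by
      rw [← Finset.add_sum_erase s' (fun i => w' i * F (x' i)) hjs']
      have h1 : ∑ i ∈ s'.erase j, w' i * F (x' i) = ∑ i ∈ s'.erase j, w i * F (x i) := by
        refine Finset.sum_congr rfl fun i hi => ?_
        rw [hw', hx', Function.update_of_ne (htsub i hi).1, Function.update_of_ne (htsub i hi).1]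
      have h2 : w' j * F (x' j) = W * F y := by
        rw [hw', hx', Function.update_self, Function.update_self]
      rw [h1, h2, herase_comm, sum_pair_split s hj hl hjl (fun i => w i * F (x i))]
      linarith
    have hIH := IH (n - 1) (by omega) s' w' x' hcard'
      (fun i hi => by
        rcases eq_or_ne i j with rfl | hij
        · rw [hw', Function.update_self]
          calc α ≤ w i := hw i hj
            _ ≤ W := by simp only [hWdef]; linarith [hwpos l hl]
        · rw [hw', Function.update_of_ne hij]
          exact hw i (Finset.mem_of_mem_erase hi))
      hsum'w
      (fun i hi => by
        rcases eq_or_ne i j with rfl | hij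
        · rw [hx', Function.update_self]; exact hyΩ
        · rw [hx', Function.update_of_ne hij]
          exact hx i (Finset.mem_of_mem_erase hi))
      (by rw [hsum'x]; exact hbar)
    rw [hsum'x] at hIH
    exact le_trans hsum'F hIH

/-- Integral additivity over a finite a.e.-disjoint family of null-measurable sets. -/
lemma integral_finset_biUnion_ae {X : Type*} [MeasurableSpace X] {μ : Measure X} (f : X → ℝ)
    (t : Finset (Set X)) (hm : ∀ J ∈ t, NullMeasurableSet J μ)
    (hd : (↑t : Set (Set X)).Pairwise (AEDisjoint μ))
    (hf : ∀ J ∈ t, IntegrableOn f J μ) :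
    ∫ x in ⋃ J ∈ t, J, f x ∂μ = ∑ J ∈ t, ∫ x in J, f x ∂μ := by
  classical
  induction t using Finset.induction_on with
  | empty => simp
  | insert a t hat IH =>
    simp only [Finset.coe_insert, Set.pairwise_insert, Finset.forall_mem_insert,
      Finset.set_biUnion_insert] at hm hd hf ⊢
    have hdis : AEDisjoint μ a (⋃ J ∈ t, J) := by
      show μ (a ∩ ⋃ J ∈ t, J) = 0
      rw [Set.inter_iUnion₂]
      have hz : ∑ J ∈ t, μ (a ∩ J) = 0 :=
        Finset.sum_eq_zero fun J hJ => (hd.2 J hJ (ne_of_mem_of_not_mem hJ hat).symm).1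
      exact le_antisymm (hz ▸ measure_biUnion_finset_le t _) zero_le
    have hmu : NullMeasurableSet (⋃ J ∈ t, J) μ :=
      NullMeasurableSet.biUnion t.countable_toSet hm.2
    have hfu : IntegrableOn f (⋃ J ∈ t, J) μ :=
      integrableOn_finset_iUnion.mpr hf.2
    rw [integral_union_ae hdis hmu hf.1 hfu, Finset.sum_insert hat, IH hm.2 hd.1 hf.2]

/-- Every element of an `α`-tree has positive measure. -/
lemma AlphaTree.gen_pos {X : Type*} [MeasurableSpace X] {μ : Measure X} {α : ℝ}
    (T : AlphaTree μ α) (hα : 0 < α) (hμ0 : 0 < μ Set.univ) :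
    ∀ m, ∀ J ∈ T.gen m, 0 < μ J := by
  intro m
  induction m with
  | zero =>
    intro J hJ
    rw [T.gen_zero, Set.mem_singleton_iff] at hJ
    rw [hJ]
    exact hμ0
  | succ m ih =>
    intro J hJ
    rw [T.gen_succ, Set.mem_iUnion₂] at hJ
    obtain ⟨K, hK, hJK⟩ := hJ
    refine lt_of_lt_of_le ?_ (T.measure_child m K hK J hJK)
    exact ENNReal.mul_pos (by simp [ENNReal.ofReal_pos, hα]) (ih K hK).ne'

/-- The point `(⟨φ⟩_J, ⟨φ²⟩_J)` lies in `Omega` when `J ∈ 𝒯` and `‖φ‖_{BMO} ≤ 1`. -/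
lemma point_mem_Omega {X : Type*} [MeasurableSpace X] {μ : Measure X} {α : ℝ}
    (T : AlphaTree μ α) {φ : X → ℝ} (hφ : T.MemBMO φ) (hφ1 : T.bmoNorm φ ≤ 1)
    {J : Set X} (hJ : T.Mem J) (hJ0 : 0 < μ J) (hJfin : μ J < ⊤) :
    (avgOn μ J φ, avgOn μ J (fun x => (φ x) ^ 2)) ∈ Omega := by
  set c := (μ J).toReal with hcdef
  have hc : 0 < c := ENNReal.toReal_pos hJ0.ne' hJfin.ne
  set a := avgOn μ J φ with hadef
  set b := avgOn μ J (fun x => (φ x) ^ 2) with hbdef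
  have ha : a = c⁻¹ * ∫ x in J, φ x ∂μ := by
    rw [hadef, avgOn, setAverage_eq, smul_eq_mul, hcdef, measureReal_def]
  have hb : b = c⁻¹ * ∫ x in J, (φ x) ^ 2 ∂μ := by
    rw [hbdef, avgOn, setAverage_eq, smul_eq_mul, hcdef, measureReal_def]
  have hIφ : IntegrableOn φ J μ := hφ.1.integrableOn
  have hIφ2 : IntegrableOn (fun x => (φ x) ^ 2) J μ := hφ.2.1.integrableOn
  have hIconst : IntegrableOn (fun _ : X => a ^ 2) J μ := by
    exact integrableOn_const hJfin.ne
  have hI1 : IntegrableOn (fun x => (φ x) ^ 2 - (2 * a) * φ x) J μ :=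
    hIφ2.sub (hIφ.const_mul (2 * a))
  have e1 : ∫ x in J, (φ x - a) ^ 2 ∂μ
      = (∫ x in J, (φ x) ^ 2 ∂μ) - 2 * a * (∫ x in J, φ x ∂μ) + a ^ 2 * c := by
    have h1 : ∫ x in J, (φ x - a) ^ 2 ∂μ
        = ∫ x in J, ((φ x) ^ 2 - (2 * a) * φ x + a ^ 2) ∂μ := by
      congr 1
      funext x
      ring
    rw [h1, integral_add hI1 hIconst, integral_sub hIφ2 (hIφ.const_mul (2 * a)),
      integral_const_mul, integral_const]
    simp only [smul_eq_mul, Measure.restrict_apply_univ, measureReal_restrict_apply_univ, measureReal_def]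
    rw [← hcdef]
    ring
  have key : b - a ^ 2 = c⁻¹ * ∫ x in J, (φ x - a) ^ 2 ∂μ := by
    rw [e1, hb, ha]
    field_simp
    ring
  have h0 : 0 ≤ b - a ^ 2 := by
    rw [key]
    exact mul_nonneg (by positivity) (integral_nonneg fun x => sq_nonneg _)
  have hmem : Real.sqrt (b - a ^ 2) ∈ T.bmoSet φ := ⟨J, hJ, rfl⟩
  have hle : Real.sqrt (b - a ^ 2) ≤ 1 := le_trans (le_csSup hφ.2.2 hmem) hφ1
  have h1 : b - a ^ 2 ≤ 1 := by
    nlinarith [Real.sq_sqrt h0, Real.sqrt_nonneg (b - a ^ 2)]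
  show a ^ 2 ≤ b ∧ b ≤ a ^ 2 + 1
  exact ⟨by linarith, by linarith⟩

end Statement10Aux



/-- If `φ ∈ BMO(𝒯)` with `‖φ‖_{BMO(𝒯)} ≤ 1` and `F` is `α`-concave
on `Ω`, then for every `I ∈ 𝒯`,
`F(⟨φ⟩_I, ⟨φ²⟩_I) ≥ (1/μ(I)) Σ_{J ∈ C(I)} μ(J) F(⟨φ⟩_J, ⟨φ²⟩_J)`. -/
theorem statement10 {X : Type*} [MeasurableSpace X] (μ : Measure X)
    (hμ0 : 0 < μ Set.univ) (hμfin : μ Set.univ < ⊤)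
    (α : ℝ) (hα : α ∈ Set.Ioc (0 : ℝ) (1 / 2))
    (T : AlphaTree μ α) (φ : X → ℝ)
    (hφ : T.MemBMO φ) (hφ1 : T.bmoNorm φ ≤ 1)
    (F : ℝ × ℝ → ℝ) (hF : AlphaConcaveOn α F)
    (I : Set X) (hI : T.Mem I) :
    (1 / (μ I).toReal) *
        ∑' J : T.children I,
          (μ (J : Set X)).toReal *
            F (avgOn μ (J : Set X) φ, avgOn μ (J : Set X) (fun x => (φ x) ^ 2)) ≤
      F (avgOn μ I φ, avgOn μ I (fun x => (φ x) ^ 2)) := by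
  classical
  obtain ⟨m, hIm⟩ := hI
  have hαpos := hα.1
  have hIpos : 0 < μ I := T.gen_pos hαpos hμ0 m I hIm
  have hIfin : μ I < ⊤ := lt_of_le_of_lt (measure_mono (Set.subset_univ I)) hμfin
  have hIposR : 0 < (μ I).toReal := ENNReal.toReal_pos hIpos.ne' hIfin.ne
  have hIne : (μ I).toReal ≠ 0 := hIposR.ne'
  -- children facts
  have hChMem : ∀ J ∈ T.children I, J ∈ T.gen (m + 1) := by
    intro J hJ
    rw [T.gen_succ]
    exact Set.mem_iUnion₂.2 ⟨I, hIm, hJ⟩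
  have hChMeas : ∀ J ∈ T.children I, MeasurableSet J := fun J hJ =>
    T.measurableSet _ J (hChMem J hJ)
  have hChLB : ∀ J ∈ T.children I, ENNReal.ofReal α * μ I ≤ μ J := T.measure_child m I hIm
  have hcpos : 0 < ENNReal.ofReal α * μ I :=
    ENNReal.mul_pos (by simp [ENNReal.ofReal_pos, hαpos]) hIpos.ne'
  have hChPos : ∀ J ∈ T.children I, 0 < μ J := fun J hJ => lt_of_lt_of_le hcpos (hChLB J hJ)
  have hChFin : ∀ J ∈ T.children I, μ J < ⊤ := fun J hJ =>
    lt_of_le_of_lt (measure_mono (Set.subset_univ J)) hμfin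
  have hChDisj : (T.children I).Pairwise fun J K => μ (J ∩ K) = 0 := T.ae_disjoint m I hIm
  -- finiteness of the family of children
  have hfin : (T.children I).Finite := by
    have h1 : Set.Finite {J : T.children I | ENNReal.ofReal α * μ I ≤ μ (J : Set X)} := by
      refine Measure.finite_const_le_meas_of_disjoint_iUnion₀ μ hcpos
        (As := fun J : T.children I => (J : Set X))
        (fun J => (hChMeas J J.2).nullMeasurableSet) ?_ ?_
      · intro J K hne
        exact hChDisj J.2 K.2 (Subtype.coe_injective.ne hne)
      · exact (lt_of_le_of_lt (measure_mono (Set.iUnion_subset fun J => Set.subset_univ _))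
          hμfin).ne
    have h2 : (Set.univ : Set (T.children I)).Finite := h1.subset fun J _ => hChLB J J.2
    have h3 : Finite (T.children I) := Set.finite_univ_iff.1 h2
    exact @Set.toFinite _ _ h3
  set 𝒥 := hfin.toFinset with h𝒥
  have hmem𝒥 : ∀ J, J ∈ 𝒥 ↔ J ∈ T.children I := fun J => hfin.mem_toFinset
  have hUnion : ⋃ J ∈ 𝒥, J = I := by
    rw [← T.sUnion_children m I hIm]
    ext x
    simp only [Set.mem_iUnion, Set.mem_sUnion, hmem𝒥, exists_prop]
  have hPair : (↑𝒥 : Set (Set X)).Pairwise (AEDisjoint μ) := by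
    intro J hJ K hK hne
    exact hChDisj ((hmem𝒥 J).1 (Finset.mem_coe.1 hJ)) ((hmem𝒥 K).1 (Finset.mem_coe.1 hK)) hne
  have hMeasSum : ∑ J ∈ 𝒥, μ J = μ I := by
    rw [← hUnion]
    exact (measure_biUnion_finset₀ (f := fun J : Set X => J)
      (fun J hJ K hK hne => hPair hJ hK hne)
      (fun J hJ => (hChMeas J ((hmem𝒥 J).1 hJ)).nullMeasurableSet)).symm
  have hIntSum : ∀ f : X → ℝ, Integrable f μ →
      ∫ x in I, f x ∂μ = ∑ J ∈ 𝒥, ∫ x in J, f x ∂μ := by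
    intro f hf
    rw [← hUnion]
    exact integral_finset_biUnion_ae f 𝒥
      (fun J hJ => (hChMeas J ((hmem𝒥 J).1 hJ)).nullMeasurableSet) hPair
      (fun J hJ => hf.integrableOn)
  -- weights sum to one
  have hwsum : ∑ J ∈ 𝒥, (μ J).toReal / (μ I).toReal = 1 := by
    rw [← Finset.sum_div]
    have h1 : ∑ J ∈ 𝒥, (μ J).toReal = (μ I).toReal := by
      rw [← hMeasSum, ENNReal.toReal_sum (fun J hJ => (hChFin J ((hmem𝒥 J).1 hJ)).ne)]
    rw [h1, div_self hIne]
  have hwα : ∀ J ∈ 𝒥, α ≤ (μ J).toReal / (μ I).toReal := by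
    intro J hJ
    have hle := hChLB J ((hmem𝒥 J).1 hJ)
    have h2 : α * (μ I).toReal ≤ (μ J).toReal := by
      have h3 := ENNReal.toReal_mono (hChFin J ((hmem𝒥 J).1 hJ)).ne hle
      rwa [ENNReal.toReal_mul, ENNReal.toReal_ofReal hαpos.le] at h3
    rw [le_div_iff₀ hIposR]
    exact h2
  have hptΩ : ∀ J ∈ 𝒥, (avgOn μ J φ, avgOn μ J fun x => (φ x) ^ 2) ∈ Omega := fun J hJ =>
    point_mem_Omega T hφ hφ1 ⟨m + 1, hChMem J ((hmem𝒥 J).1 hJ)⟩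
      (hChPos J ((hmem𝒥 J).1 hJ)) (hChFin J ((hmem𝒥 J).1 hJ))
  have hIΩ : (avgOn μ I φ, avgOn μ I fun x => (φ x) ^ 2) ∈ Omega :=
    point_mem_Omega T hφ hφ1 ⟨m, hIm⟩ hIpos hIfin
  -- averages over `I` are the weighted averages over children
  have havg : ∀ f : X → ℝ, Integrable f μ →
      ∑ J ∈ 𝒥, ((μ J).toReal / (μ I).toReal) * avgOn μ J f = avgOn μ I f := by
    intro f hf
    have h1 : ∀ J ∈ 𝒥, ((μ J).toReal / (μ I).toReal) * avgOn μ J f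
        = (∫ x in J, f x ∂μ) / (μ I).toReal := by
      intro J hJ
      have hJne : (μ J).toReal ≠ 0 :=
        (ENNReal.toReal_pos (hChPos J ((hmem𝒥 J).1 hJ)).ne'
          (hChFin J ((hmem𝒥 J).1 hJ)).ne).ne'
      rw [avgOn, setAverage_eq, smul_eq_mul, measureReal_def]
      field_simp
    rw [Finset.sum_congr rfl h1, ← Finset.sum_div, ← hIntSum f hf, avgOn, setAverage_eq,
      smul_eq_mul, div_eq_inv_mul, measureReal_def]
  have hbar : ∑ J ∈ 𝒥, ((μ J).toReal / (μ I).toReal) •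
        (avgOn μ J φ, avgOn μ J fun x => (φ x) ^ 2)
      = ((avgOn μ I φ, avgOn μ I fun x => (φ x) ^ 2) : ℝ × ℝ) := by
    have h1 := havg φ hφ.1
    have h2 := havg (fun x => (φ x) ^ 2) hφ.2.1
    rw [Prod.ext_iff]
    constructor
    · rw [Prod.fst_sum]
      simpa using h1
    · rw [Prod.snd_sum]
      simpa using h2
  have hmain := concave_sum hα hF 𝒥.card 𝒥
    (fun J => (μ J).toReal / (μ I).toReal)
    (fun J => (avgOn μ J φ, avgOn μ J fun x => (φ x) ^ 2))
    rfl hwα hwsum hptΩ (by rw [hbar]; exact hIΩ)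
  rw [hbar] at hmain
  -- rewrite the tsum as a finite sum
  haveI : Fintype ↥(T.children I) := hfin.fintype
  have htsum : (∑' J : T.children I,
        (μ (J : Set X)).toReal *
          F (avgOn μ (J : Set X) φ, avgOn μ (J : Set X) (fun x => (φ x) ^ 2)))
      = ∑ J ∈ 𝒥, (μ J).toReal * F (avgOn μ J φ, avgOn μ J fun x => (φ x) ^ 2) := by
    rw [tsum_fintype]
    exact (Finset.sum_subtype 𝒥 (fun J => hmem𝒥 J)
      (fun J => (μ J).toReal * F (avgOn μ J φ, avgOn μ J fun x => (φ x) ^ 2))).symm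
  rw [htsum]
  have hfinal : (1 / (μ I).toReal) *
        ∑ J ∈ 𝒥, (μ J).toReal * F (avgOn μ J φ, avgOn μ J fun x => (φ x) ^ 2)
      = ∑ J ∈ 𝒥, ((μ J).toReal / (μ I).toReal) *
          F (avgOn μ J φ, avgOn μ J fun x => (φ x) ^ 2) := by
    rw [Finset.mul_sum]
    exact Finset.sum_congr rfl fun J _ => by ring
  rw [hfinal]
  exact hmain
end
end
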